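/- arXiv:2012.14812 — 7 statements merged into one kernel-verified Lean document; each statement's English description precedes it below -/
import Mathlib

section
/- Let f : A → B be a K-linear map with f(1)=1 between commutative unital K-algebras over a field K of characteristic zero. Then the cumulants of f satisfy κ(f)_1 = f and, for every n ≥ 0 and all a_1,…,a_n,b,c ∈ A, the recursion κ(f)_{n+2}(a_1,…,a_n,b,c) = κ(f)_{n+1}(a_1,…,a_n,bc) − Σ_{S ⊆ {1,…,n}} κ(f)_{|S|+1}((a_i)_{i∈S}, b)·κ(f)_{n−|S|+1}((a_j)_{j∉S}, c). -/
open Finset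

/-- The set of partitions of `{0,…,n-1}` into nonempty, pairwise disjoint blocks. -/
def partitionsOf (n : ℕ) : Finset (Finset (Finset (Fin n))) :=
  ((Finset.univ : Finset (Fin n)).powerset.powerset).filter fun P =>
    (∀ s ∈ P, s.Nonempty) ∧ (∀ s ∈ P, ∀ t ∈ P, s ≠ t → s ∩ t = ∅) ∧ P.sup id = Finset.univ

/-- The `n`-th cumulant of a map `f` between commutative rings:
`κ(f)_n(a_1,…,a_n) = Σ_{partitions} (−1)^{k−1}(k−1)! ∏_j f(∏_{i ∈ I_j} a_i)`. -/
noncomputable def cumul {R S : Type*} [CommRing R] [CommRing S]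
    (f : R → S) (n : ℕ) (a : Fin n → R) : S :=
  ∑ P ∈ partitionsOf n,
    ((-1 : ℤ) ^ (P.card - 1) * ((P.card - 1).factorial : ℤ)) • ∏ s ∈ P, f (∏ i ∈ s, a i)

/-- Restriction of a family `a` to a finite subset `s` of its index set. -/
noncomputable def restr {α β : Type*} (a : α → β) (s : Finset α) : Fin s.card → β :=
  fun i => a (s.equivFin.symm i).1

/-!
Work with cumulants indexed by an arbitrary finite set. Partitions of `{x, y} ∪ s` fall into two
classes. Those with `x` and `y` in a common block are the partitions of `{x} ∪ s` with `a x`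
replaced by `a x * a y`; they add up to `κ_{n+1}(…, bc)`. A partition `P` separating `x` from `y`
arises in the products `κ({x} ∪ T) κ({y} ∪ (s \ T))` exactly once for each `Q ⊆ P` containing the
block of `x` but not that of `y`, namely as the pair `(Q, P \ Q)`. Summing the coefficients of these
pairs, with `|P| = m + 2`, gives
`∑ⱼ (m choose j) (-1)ʲ j! (-1)ᵐ⁻ʲ (m-j)! = (-1)ᵐ (m+1)!`, the coefficient of `P` up to sign.
-/

namespace Cumulant

theorem sum_filter_powerset_insert_insert {γ M : Type*} [DecidableEq γ] [AddCommMonoid M]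
    {P : Finset γ} {u v : γ} (huv : u ≠ v) (hu : u ∉ P) (hv : v ∉ P) (g : Finset γ → M) :
    ∑ Q ∈ (insert u (insert v P)).powerset with u ∈ Q ∧ v ∉ Q, g Q =
      ∑ Q ∈ P.powerset, g (insert u Q) := by
  have hfilter : {Q ∈ (insert u (insert v P)).powerset | u ∈ Q ∧ v ∉ Q} =
      P.powerset.image (insert u) := by
    ext Q
    simp only [mem_filter, mem_powerset, mem_image]
    constructor
    · rintro ⟨hQ, huQ, hvQ⟩
      refine ⟨Q.erase u, fun x hx => ?_, insert_erase huQ⟩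
      have := hQ (mem_of_mem_erase hx)
      grind
    · rintro ⟨Q, hQ, rfl⟩
      exact ⟨insert_subset_insert _ (hQ.trans (subset_insert _ _)), mem_insert_self _ _,
        by grind⟩
  have hinj : Set.InjOn (insert u) (P.powerset : Set (Finset γ)) := fun Q hQ R hR h => by
    rw [← erase_insert (notMem_mono (mem_powerset.1 hQ) hu), h,
      erase_insert (notMem_mono (mem_powerset.1 hR) hu)]
  rw [hfilter, sum_image hinj]

theorem insert_insert_sdiff_insert {γ : Type*} [DecidableEq γ] {s T : Finset γ} {x y : γ}
    (hxy : x ≠ y) (hx : x ∉ s) (hy : y ∉ s) (hT : T ⊆ s) :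
    insert x (insert y s) \ insert x T = insert y (s \ T) := by
  ext i
  simp only [mem_sdiff, mem_insert]
  grind

section Partitions

variable {α : Type*} [DecidableEq α]

structure IsPartition (s : Finset α) (P : Finset (Finset α)) : Prop where
  nonempty : ∀ t ∈ P, t.Nonempty
  disjoint : ∀ t ∈ P, ∀ u ∈ P, t ≠ u → t ∩ u = ∅
  sup_eq : P.sup id = s

instance (s : Finset α) : DecidablePred (IsPartition s) := fun P =>
  decidable_of_iff ((∀ t ∈ P, t.Nonempty) ∧ (∀ t ∈ P, ∀ u ∈ P, t ≠ u → t ∩ u = ∅) ∧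
    P.sup id = s) ⟨fun ⟨h₁, h₂, h₃⟩ => ⟨h₁, h₂, h₃⟩, fun ⟨h₁, h₂, h₃⟩ => ⟨h₁, h₂, h₃⟩⟩

namespace IsPartition

variable {s t u : Finset α} {P Q : Finset (Finset α)} {x : α}

theorem mk' (hne : ∀ t ∈ P, t.Nonempty) (heq : ∀ t ∈ P, ∀ u ∈ P, ∀ x ∈ t, x ∈ u → t = u)
    (hsub : ∀ t ∈ P, t ⊆ s) (hcover : ∀ x ∈ s, ∃ t ∈ P, x ∈ t) : IsPartition s P where
  nonempty := hne
  disjoint t ht u hu htu := eq_empty_of_forall_notMem fun x hx =>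
    htu (heq t ht u hu x (mem_inter.1 hx).1 (mem_inter.1 hx).2)
  sup_eq := by
    ext x
    simp only [mem_sup, id]
    exact ⟨fun ⟨t, ht, hx⟩ => hsub t ht hx, hcover x⟩

theorem subset_of_mem (hP : IsPartition s P) (ht : t ∈ P) : t ⊆ s :=
  hP.sup_eq ▸ le_sup (f := id) ht

theorem exists_mem (hP : IsPartition s P) (hx : x ∈ s) : ∃ t ∈ P, x ∈ t := by
  simpa using mem_sup.1 (hP.sup_eq ▸ hx)

theorem eq_of_mem (hP : IsPartition s P) (ht : t ∈ P) (hu : u ∈ P) (hxt : x ∈ t)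
    (hxu : x ∈ u) : t = u := by
  by_contra htu
  simpa [hP.disjoint t ht u hu htu] using mem_inter.2 ⟨hxt, hxu⟩

theorem mem_sup_iff (hP : IsPartition s P) (hQ : Q ⊆ P) (ht : t ∈ P) (hxt : x ∈ t) :
    x ∈ Q.sup id ↔ t ∈ Q := by
  simp only [mem_sup, id]
  exact ⟨fun ⟨u, hu, hxu⟩ => hP.eq_of_mem ht (hQ hu) hxt hxu ▸ hu, fun h => ⟨t, h, hxt⟩⟩

theorem of_subset (hP : IsPartition s P) (hQ : Q ⊆ P) : IsPartition (Q.sup id) Q where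
  nonempty t ht := hP.nonempty t (hQ ht)
  disjoint t ht u hu := hP.disjoint t (hQ ht) u (hQ hu)
  sup_eq := rfl

theorem sdiff (hP : IsPartition s P) (hQ : Q ⊆ P) : IsPartition (s \ Q.sup id) (P \ Q) := by
  refine .mk' (fun t ht => hP.nonempty t (mem_sdiff.1 ht).1)
    (fun t ht u hu _ => hP.eq_of_mem (mem_sdiff.1 ht).1 (mem_sdiff.1 hu).1) ?_ ?_
  · intro t ht x hx
    rw [mem_sdiff, hP.mem_sup_iff hQ (mem_sdiff.1 ht).1 hx]
    exact ⟨hP.subset_of_mem (mem_sdiff.1 ht).1 hx, (mem_sdiff.1 ht).2⟩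
  · intro x hx
    obtain ⟨t, ht, hxt⟩ := hP.exists_mem (mem_sdiff.1 hx).1
    exact ⟨t, mem_sdiff.2 ⟨ht, (hP.mem_sup_iff hQ ht hxt).not.1 (mem_sdiff.1 hx).2⟩, hxt⟩

theorem disjoint_of_disjoint (hst : Disjoint s t) (hP : IsPartition s P) (hQ : IsPartition t Q) :
    Disjoint P Q := by
  refine disjoint_left.2 fun u huP huQ => ?_
  obtain ⟨x, hx⟩ := hP.nonempty u huP
  exact disjoint_left.1 hst (hP.subset_of_mem huP hx) (hQ.subset_of_mem huQ hx)

theorem union (hst : Disjoint s t) (hP : IsPartition s P) (hQ : IsPartition t Q) :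
    IsPartition (s ∪ t) (P ∪ Q) where
  nonempty u hu := (mem_union.1 hu).elim (hP.nonempty u) (hQ.nonempty u)
  disjoint u hu v hv huv := by
    refine eq_empty_of_forall_notMem fun x hx => ?_
    rcases mem_union.1 hu with hu | hu <;> rcases mem_union.1 hv with hv | hv
    · simp [hP.disjoint u hu v hv huv] at hx
    · exact disjoint_left.1 hst (hP.subset_of_mem hu (mem_inter.1 hx).1)
        (hQ.subset_of_mem hv (mem_inter.1 hx).2)
    · exact disjoint_left.1 hst (hP.subset_of_mem hv (mem_inter.1 hx).2)
        (hQ.subset_of_mem hu (mem_inter.1 hx).1)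
    · simp [hQ.disjoint u hu v hv huv] at hx
  sup_eq := by rw [sup_union, hP.sup_eq, hQ.sup_eq]; rfl

end IsPartition

def partitions (s : Finset α) : Finset (Finset (Finset α)) :=
  s.powerset.powerset.filter (IsPartition s)

@[simp]
theorem mem_partitions {s : Finset α} {P : Finset (Finset α)} :
    P ∈ partitions s ↔ IsPartition s P := by
  simp only [partitions, mem_filter, mem_powerset, and_iff_right_iff_imp]
  exact fun hP t ht => mem_powerset.2 (hP.subset_of_mem ht)

theorem sum_powerset_partitions_sdiff {M : Type*} [AddCommMonoid M]
    (U : Finset α) (F : Finset (Finset α) → Finset (Finset α) → M) :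
    ∑ T ∈ U.powerset, ∑ P ∈ partitions T, ∑ Q ∈ partitions (U \ T), F P Q =
      ∑ P ∈ partitions U, ∑ Q ∈ P.powerset, F Q (P \ Q) := by
  simp_rw [← sum_product' (f := F)]
  rw [sum_sigma', sum_sigma']
  have hsplit : ∀ x ∈ U.powerset.sigma fun T => partitions T ×ˢ partitions (U \ T),
      x.2.1.sup id = x.1 ∧ (x.2.1 ∪ x.2.2) \ x.2.1 = x.2.2 := by
    rintro ⟨T, P, Q⟩ hx
    simp only [mem_sigma, mem_product, mem_partitions] at hx
    exact ⟨hx.2.1.sup_eq,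
      union_sdiff_cancel_left (hx.2.1.disjoint_of_disjoint disjoint_sdiff hx.2.2)⟩
  refine sum_nbij' (fun x => ⟨x.2.1 ∪ x.2.2, x.2.1⟩) (fun y => ⟨y.2.sup id, (y.2, y.1 \ y.2)⟩)
    ?_ ?_ ?_ ?_ fun x hx => by rw [(hsplit x hx).2]
  · rintro ⟨T, P, Q⟩ hx
    simp only [mem_sigma, mem_powerset, mem_product, mem_partitions] at hx ⊢
    obtain ⟨hT, hP, hQ⟩ := hx
    refine ⟨?_, subset_union_left⟩
    simpa [union_sdiff_of_subset hT] using hP.union disjoint_sdiff hQ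
  · rintro ⟨P, Q⟩ hy
    simp only [mem_sigma, mem_powerset, mem_product, mem_partitions] at hy ⊢
    obtain ⟨hP, hQ⟩ := hy
    exact ⟨hP.sup_eq ▸ sup_mono hQ, hP.of_subset hQ, hP.sdiff hQ⟩
  · rintro ⟨T, P, Q⟩ hx
    simp [hsplit _ hx]
  · rintro ⟨P, Q⟩ hy
    simp only [mem_sigma, mem_powerset] at hy
    simp [union_sdiff_of_subset hy.2]

end Partitions

def cumulantCoeff (k : ℕ) : ℤ := (-1) ^ (k - 1) * (k - 1).factorial

theorem sum_range_choose_smul_cumulantCoeff (m : ℕ) :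
    ∑ j ∈ range (m + 1), m.choose j • (cumulantCoeff (j + 1) * cumulantCoeff (m + 1 - j)) =
      -cumulantCoeff (m + 2) := by
  have hterm : ∀ j ∈ range (m + 1), m.choose j • (cumulantCoeff (j + 1) *
      cumulantCoeff (m + 1 - j)) = (-1) ^ m * (m.factorial : ℤ) := by
    intro j hj
    obtain ⟨k, rfl⟩ := Nat.exists_eq_add_of_le (Nat.lt_succ_iff.1 (mem_range.1 hj))
    rw [← Nat.add_choose_mul_factorial_mul_factorial]
    simp only [cumulantCoeff, show j + k + 1 - j - 1 = k by omega, Nat.add_sub_cancel,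
      nsmul_eq_mul]
    push_cast
    rw [Nat.choose_symm_add]
    ring
  rw [sum_congr rfl hterm, sum_const, card_range, cumulantCoeff, show m + 2 - 1 = m + 1 by omega,
    Nat.factorial_succ, nsmul_eq_mul]
  push_cast
  ring

theorem sum_powerset_cumulantCoeff {γ : Type*} [DecidableEq γ] {P : Finset γ} {u v : γ}
    (hu : u ∈ P) (hv : v ∈ P) (huv : u ≠ v) :
    ∑ Q ∈ P.powerset with u ∈ Q ∧ v ∉ Q, cumulantCoeff #Q * cumulantCoeff #(P \ Q) =
      -cumulantCoeff #P := by
  obtain ⟨P, hu', hv', rfl⟩ : ∃ P', u ∉ P' ∧ v ∉ P' ∧ P = insert u (insert v P') :=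
    ⟨(P.erase u).erase v, by simp, by simp, by
      rw [insert_erase (mem_erase.2 ⟨huv.symm, hv⟩), insert_erase hu]⟩
  have hu'' : u ∉ insert v P := by grind
  have hcard : ∀ Q ⊆ P, #(insert u (insert v P) \ insert u Q) = #P + 1 - #Q := by
    intro Q hQ
    rw [card_sdiff_of_subset (insert_subset_insert _ (hQ.trans (subset_insert _ _))),
      card_insert_of_notMem hu'', card_insert_of_notMem hv',
      card_insert_of_notMem (notMem_mono hQ hu')]
    have := card_le_card hQ
    omega
  rw [sum_filter_powerset_insert_insert huv hu' hv',
    sum_congr rfl fun Q hQ => by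
      rw [hcard Q (mem_powerset.1 hQ), card_insert_of_notMem (notMem_mono (mem_powerset.1 hQ) hu')],
    sum_powerset_apply_card (fun j => cumulantCoeff (j + 1) * cumulantCoeff (#P + 1 - j)),
    sum_range_choose_smul_cumulantCoeff, card_insert_of_notMem hu'', card_insert_of_notMem hv']

theorem IsPartition.sum_powerset_filter_cumulantCoeff {α : Type*} [DecidableEq α] {U : Finset α}
    {P : Finset (Finset α)} (hP : IsPartition U P) {x y : α} (hx : x ∈ U) (hy : y ∈ U) :
    ∑ Q ∈ P.powerset with x ∈ Q.sup id ∧ y ∉ Q.sup id, cumulantCoeff #Q * cumulantCoeff #(P \ Q) =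
      if ∀ t ∈ P, (x ∈ t ↔ y ∈ t) then 0 else -cumulantCoeff #P := by
  obtain ⟨tx, htx, hxt⟩ := hP.exists_mem hx
  obtain ⟨ty, hty, hyt⟩ := hP.exists_mem hy
  rw [filter_congr fun Q hQ => by
    rw [hP.mem_sup_iff (mem_powerset.1 hQ) htx hxt, hP.mem_sup_iff (mem_powerset.1 hQ) hty hyt]]
  by_cases htxy : tx = ty
  · subst htxy
    rw [if_pos fun t ht => ⟨fun h => hP.eq_of_mem htx ht hxt h ▸ hyt,
      fun h => hP.eq_of_mem htx ht hyt h ▸ hxt⟩]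
    simp
  · rw [if_neg fun h => htxy (hP.eq_of_mem htx hty ((h tx htx).1 hxt) hyt),
      sum_powerset_cumulantCoeff htx hty htxy]

section CumulantOn

variable {α R S : Type*} [DecidableEq α] [CommMonoid R] [CommRing S] (f : R → S)

def cumulantOn (a : α → R) (s : Finset α) : S :=
  ∑ P ∈ partitions s, cumulantCoeff #P • ∏ t ∈ P, f (∏ i ∈ t, a i)

theorem cumulantOn_congr {a b : α → R} {s : Finset α} (h : ∀ i ∈ s, a i = b i) :
    cumulantOn f a s = cumulantOn f b s := by
  refine sum_congr rfl fun P hP => ?_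
  refine congrArg _ (prod_congr rfl fun t ht => congrArg f (prod_congr rfl fun i hi => ?_))
  exact h i ((mem_partitions.1 hP).subset_of_mem ht hi)

theorem cumulantOn_mul_cumulantOn (a : α → R) (s t : Finset α) :
    cumulantOn f a s * cumulantOn f a t = ∑ P ∈ partitions s, ∑ Q ∈ partitions t,
      (cumulantCoeff #P * cumulantCoeff #Q) •
        ((∏ u ∈ P, f (∏ i ∈ u, a i)) * ∏ u ∈ Q, f (∏ i ∈ u, a i)) := by
  simp only [cumulantOn, sum_mul_sum, smul_mul_smul_comm]

end CumulantOn

theorem cumul_eq_cumulantOn {R S : Type*} [CommRing R] [CommRing S] (f : R → S) (n : ℕ)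
    (a : Fin n → R) : cumul f n a = cumulantOn f a univ := by
  refine sum_congr (ext fun P => ?_) fun _ _ => rfl
  simp only [partitionsOf, mem_filter, mem_powerset, mem_partitions]
  exact ⟨fun ⟨_, h₁, h₂, h₃⟩ => ⟨h₁, h₂, h₃⟩,
    fun h => ⟨fun t _ => mem_powerset.2 (subset_univ t), h.nonempty, h.disjoint, h.sup_eq⟩⟩

section Image

variable {α β R S : Type*} [DecidableEq α] [CommMonoid R] [CommRing S] (π : β → α) (W : Finset β)

def IsSaturated (P : Finset (Finset β)) : Prop :=
  ∀ u ∈ P, ∀ i ∈ u, ∀ j ∈ W, π j = π i → j ∈ u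

def preimagePart (u : Finset α) : Finset β := {i ∈ W | π i ∈ u}

variable {π W}

theorem image_preimagePart {u : Finset α} (hu : u ⊆ W.image π) :
    (preimagePart π W u).image π = u := by
  ext j
  simp only [preimagePart, mem_image, mem_filter]
  refine ⟨fun ⟨i, ⟨_, hi⟩, hij⟩ => hij ▸ hi, fun hj => ?_⟩
  obtain ⟨i, hi, rfl⟩ := mem_image.1 (hu hj)
  exact ⟨i, ⟨hi, hj⟩, rfl⟩

theorem prod_preimagePart (b : β → R) (u : Finset α) :
    ∏ i ∈ preimagePart π W u, b i = ∏ j ∈ u, ∏ i ∈ W with π i = j, b i := by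
  rw [← prod_fiberwise_of_maps_to (s := preimagePart π W u) (t := u) (g := π)
    (fun i hi => (mem_filter.1 hi).2)]
  refine prod_congr rfl fun j hj => prod_congr (ext fun i => ?_) fun _ _ => rfl
  simp only [preimagePart, mem_filter]
  exact ⟨fun ⟨⟨hi, _⟩, hij⟩ => ⟨hi, hij⟩, fun ⟨hi, hij⟩ => ⟨⟨hi, hij ▸ hj⟩, hij⟩⟩

variable [DecidableEq β]

instance : DecidablePred (IsSaturated π W) := fun _ => by unfold IsSaturated; infer_instance

theorem preimagePart_image {P : Finset (Finset β)} (hP : IsPartition W P)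
    (hsat : IsSaturated π W P) {u : Finset β} (hu : u ∈ P) :
    preimagePart π W (u.image π) = u := by
  ext j
  simp only [preimagePart, mem_image, mem_filter]
  exact ⟨fun ⟨hj, i, hi, hij⟩ => hsat u hu i hi j hj hij.symm,
    fun hj => ⟨hP.subset_of_mem hu hj, j, hj, rfl⟩⟩

theorem isSaturated_image_preimagePart (Q : Finset (Finset α)) :
    IsSaturated π W (Q.image (preimagePart π W)) := by
  simp only [IsSaturated, forall_mem_image, preimagePart, mem_filter]
  exact fun u _ i ⟨_, hi⟩ j hj hij => ⟨hj, hij ▸ hi⟩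

theorem IsPartition.image_preimagePart {Q : Finset (Finset α)} (hQ : IsPartition (W.image π) Q) :
    IsPartition W (Q.image (preimagePart π W)) := by
  refine .mk' ?_ ?_ ?_ ?_
  · simp only [forall_mem_image]
    intro u hu
    obtain ⟨j, hj⟩ := hQ.nonempty u hu
    obtain ⟨i, hi, rfl⟩ := mem_image.1 (hQ.subset_of_mem hu hj)
    exact ⟨i, mem_filter.2 ⟨hi, hj⟩⟩
  · simp only [forall_mem_image, preimagePart, mem_filter]
    intro u hu v hv i ⟨_, hiu⟩ ⟨_, hiv⟩
    rw [hQ.eq_of_mem hu hv hiu hiv]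
  · simp only [forall_mem_image]
    exact fun u _ => filter_subset _ _
  · intro i hi
    obtain ⟨u, hu, hiu⟩ := hQ.exists_mem (mem_image_of_mem π hi)
    exact ⟨_, mem_image_of_mem _ hu, mem_filter.2 ⟨hi, hiu⟩⟩

theorem IsPartition.image_image {P : Finset (Finset β)} (hP : IsPartition W P)
    (hsat : IsSaturated π W P) : IsPartition (W.image π) (P.image (image π)) := by
  refine .mk' ?_ ?_ ?_ ?_
  · simp only [forall_mem_image]
    exact fun u hu => (hP.nonempty u hu).image π
  · simp only [forall_mem_image]
    intro u hu v hv i hi hiv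
    obtain ⟨k, hk, hki⟩ := mem_image.1 hiv
    rw [hP.eq_of_mem hu hv hi (hsat v hv k hk i (hP.subset_of_mem hu hi) hki.symm)]
  · simp only [forall_mem_image]
    exact fun u hu => image_subset_image (hP.subset_of_mem hu)
  · simp only [exists_mem_image]
    intro j hj
    obtain ⟨i, hi, rfl⟩ := mem_image.1 hj
    obtain ⟨u, hu, hiu⟩ := hP.exists_mem hi
    exact ⟨u, hu, mem_image_of_mem π hiu⟩

variable (f : R → S)

/-- Both the merging of two variables (`π` identifying two points) and the reindexing of a
cumulant along an injection are instances of this. -/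
theorem cumulantOn_image (b : β → R) :
    cumulantOn f (fun j => ∏ i ∈ W with π i = j, b i) (W.image π) =
      ∑ P ∈ partitions W with IsSaturated π W P, cumulantCoeff #P • ∏ u ∈ P, f (∏ i ∈ u, b i) := by
  refine sum_nbij' (image (preimagePart π W)) (image (image π)) ?_ ?_ ?_ ?_ ?_
  · intro Q hQ
    exact mem_filter.2 ⟨mem_partitions.2 (mem_partitions.1 hQ).image_preimagePart,
      isSaturated_image_preimagePart Q⟩
  · intro P hP
    obtain ⟨hP, hsat⟩ := mem_filter.1 hP
    exact mem_partitions.2 ((mem_partitions.1 hP).image_image hsat)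
  · intro Q hQ
    rw [Finset.image_image]
    exact (image_congr fun u hu => image_preimagePart
      ((mem_partitions.1 hQ).subset_of_mem hu)).trans image_id'
  · intro P hP
    obtain ⟨hP, hsat⟩ := mem_filter.1 hP
    rw [Finset.image_image]
    exact (image_congr fun u hu => preimagePart_image (mem_partitions.1 hP) hsat hu).trans
      image_id'
  · intro Q hQ
    have hinj : Set.InjOn (preimagePart π W) Q := fun u hu v hv huv => by
      rw [← image_preimagePart ((mem_partitions.1 hQ).subset_of_mem hu), huv,
        image_preimagePart ((mem_partitions.1 hQ).subset_of_mem hv)]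
    rw [card_image_of_injOn hinj, prod_image hinj]
    simp only [prod_preimagePart]

theorem cumulantOn_image_of_injOn (hπ : Set.InjOn π W) (a : α → R) :
    cumulantOn f a (W.image π) = cumulantOn f (a ∘ π) W := by
  have hfibre : ∀ j ∈ W.image π, a j = ∏ i ∈ W with π i = j, a (π i) := by
    intro j hj
    obtain ⟨i, hi, rfl⟩ := mem_image.1 hj
    have : {k ∈ W | π k = π i} = {i} :=
      eq_singleton_iff_unique_mem.2 ⟨mem_filter.2 ⟨hi, rfl⟩,
        fun k hk => hπ (mem_filter.1 hk).1 hi (mem_filter.1 hk).2⟩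
    rw [this, prod_singleton]
  have hsat : ∀ P ∈ partitions W, IsSaturated π W P := fun P hP u hu i hi j hj hji =>
    hπ hj ((mem_partitions.1 hP).subset_of_mem hu hi) hji ▸ hi
  rw [cumulantOn_congr f hfibre, cumulantOn_image, filter_true_of_mem hsat]
  rfl

end Image
theorem cumul_comp_eq_cumulantOn {α R S : Type*} [DecidableEq α] [CommRing R] [CommRing S]
    (f : R → S) {k : ℕ} {e : Fin k → α} (he : Function.Injective e) (a : α → R) :
    cumul f k (a ∘ e) = cumulantOn f a (univ.image e) := by
  rw [cumul_eq_cumulantOn, cumulantOn_image_of_injOn f he.injOn]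


section Recursion

variable {α R S : Type*} [DecidableEq α] [CommMonoid R] [CommRing S] (f : R → S)

theorem sum_powerset_cumulantOn_mul_cumulantOn {x y : α} {s : Finset α} (hxy : x ≠ y)
    (hx : x ∉ s) (hy : y ∉ s) (a : α → R) :
    ∑ T ∈ s.powerset, cumulantOn f a (insert x T) * cumulantOn f a (insert y (s \ T)) =
      -∑ P ∈ partitions (insert x (insert y s)) with ¬∀ t ∈ P, (x ∈ t ↔ y ∈ t),
        cumulantCoeff #P • ∏ t ∈ P, f (∏ i ∈ t, a i) := by
  set U := insert x (insert y s)
  let F : Finset (Finset α) → Finset (Finset α) → S := fun P Q =>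
    if x ∈ P.sup id ∧ y ∉ P.sup id then
      (cumulantCoeff #P * cumulantCoeff #Q) •
        ((∏ t ∈ P, f (∏ i ∈ t, a i)) * ∏ t ∈ Q, f (∏ i ∈ t, a i))
    else 0
  have hexpand : ∀ T ∈ U.powerset, (if x ∈ T ∧ y ∉ T then
      cumulantOn f a T * cumulantOn f a (U \ T) else 0) =
        ∑ P ∈ partitions T, ∑ Q ∈ partitions (U \ T), F P Q := by
    intro T _
    rw [cumulantOn_mul_cumulantOn]
    split_ifs with h
    · refine sum_congr rfl fun P hP => sum_congr rfl fun Q _ => ?_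
      simp only [F, (mem_partitions.1 hP).sup_eq, if_pos h]
    · refine (sum_eq_zero fun P hP => sum_eq_zero fun Q _ => ?_).symm
      simp only [F, (mem_partitions.1 hP).sup_eq, if_neg h]
  have hcollect : ∀ P ∈ partitions U, ∑ Q ∈ P.powerset, F Q (P \ Q) =
      (if ∀ t ∈ P, (x ∈ t ↔ y ∈ t) then 0 else -cumulantCoeff #P) •
        ∏ t ∈ P, f (∏ i ∈ t, a i) := by
    intro P hP
    rw [← (mem_partitions.1 hP).sum_powerset_filter_cumulantCoeff (mem_insert_self x _)
      (mem_insert_of_mem (mem_insert_self y s)), sum_smul, sum_filter]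
    refine sum_congr rfl fun Q hQ => ?_
    simp only [F]
    split_ifs
    · rw [mul_comm (∏ t ∈ Q, _), prod_sdiff (mem_powerset.1 hQ)]
    · rfl
  calc ∑ T ∈ s.powerset, cumulantOn f a (insert x T) * cumulantOn f a (insert y (s \ T))
      = ∑ T ∈ U.powerset with x ∈ T ∧ y ∉ T, cumulantOn f a T * cumulantOn f a (U \ T) := by
        rw [sum_filter_powerset_insert_insert hxy hx hy]
        exact sum_congr rfl fun T hT => by
          rw [insert_insert_sdiff_insert hxy hx hy (mem_powerset.1 hT)]
    _ = ∑ T ∈ U.powerset, ∑ P ∈ partitions T, ∑ Q ∈ partitions (U \ T), F P Q := by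
        rw [sum_filter]
        exact sum_congr rfl hexpand
    _ = ∑ P ∈ partitions U, ∑ Q ∈ P.powerset, F Q (P \ Q) := sum_powerset_partitions_sdiff U F
    _ = _ := by
        rw [sum_congr rfl hcollect, sum_filter, ← sum_neg_distrib]
        refine sum_congr rfl fun P _ => ?_
        split_ifs <;> simp

theorem cumulantOn_insert_insert {x y : α} {s : Finset α} (hxy : x ≠ y) (hx : x ∉ s)
    (hy : y ∉ s) (a : α → R) :
    cumulantOn f a (insert x (insert y s)) =
      cumulantOn f (Function.update a x (a x * a y)) (insert x s) -
        ∑ T ∈ s.powerset, cumulantOn f a (insert x T) * cumulantOn f a (insert y (s \ T)) := by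
  set U := insert x (insert y s)
  let π : α → α := fun i => if i = y then x else i
  have himage : U.image π = insert x s := by
    ext j
    simp only [U, π, mem_image, mem_insert]
    grind
  have hfibre : ∀ j ∈ insert x s,
      Function.update a x (a x * a y) j = ∏ i ∈ U with π i = j, a i := by
    intro j hj
    rcases eq_or_ne j x with rfl | hjx
    · have : {i ∈ U | π i = j} = {j, y} := by
        ext i
        simp only [U, π, mem_filter, mem_insert, mem_singleton]
        grind
      rw [this, prod_pair hxy, Function.update_self]
    · have : {i ∈ U | π i = j} = {j} := by
        ext i
        simp only [U, π, mem_filter, mem_insert, mem_singleton]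
        grind
      rw [this, prod_singleton, Function.update_of_ne hjx]
  have hsat : ∀ P ∈ partitions U, IsSaturated π U P ↔ ∀ t ∈ P, (x ∈ t ↔ y ∈ t) := by
    intro P _
    constructor
    · intro h t ht
      exact ⟨fun hxt => h t ht x hxt y (by simp [U]) (by simp [π]),
        fun hyt => h t ht y hyt x (mem_insert_self x _) (by simp [π])⟩
    · intro h t ht i hi j _ hji
      have := h t ht
      simp only [π] at hji
      split_ifs at hji <;> grind
  rw [sum_powerset_cumulantOn_mul_cumulantOn f hxy hx hy, sub_neg_eq_add,
    cumulantOn_congr f hfibre, ← himage, cumulantOn_image, filter_congr hsat,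
    sum_filter_add_sum_filter_not]
  rfl

end Recursion

theorem image_univ_snoc {α : Type*} [DecidableEq α] {k : ℕ} (e : Fin k → α) (z : α) :
    univ.image (Fin.snoc e z : Fin (k + 1) → α) = insert z (univ.image e) := by
  ext; simp [Fin.exists_fin_succ', or_comm, eq_comm]

theorem cumul_snoc_restr_comp {α β R S : Type*} [DecidableEq α] [CommRing R] [CommRing S]
    (f : R → S) {ι : β → α} (hι : Function.Injective ι) (a : α → R) (T : Finset β) {z : α}
    (hz : z ∉ T.image ι) :
    cumul f (#T + 1) (Fin.snoc (restr (a ∘ ι) T) (a z)) =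
      cumulantOn f a (insert z (T.image ι)) := by
  set e : Fin #T → α := fun k => ι (T.equivFin.symm k)
  have himage : univ.image e = T.image ι := by
    ext z
    simp only [e, mem_image, mem_univ, true_and]
    exact ⟨fun ⟨k, hk⟩ => ⟨_, (T.equivFin.symm k).2, hk⟩,
      fun ⟨i, hi, hiz⟩ => ⟨T.equivFin ⟨i, hi⟩, by simpa using hiz⟩⟩
  have he : Function.Injective (Fin.snoc e z : Fin (#T + 1) → α) :=
    Fin.snoc_injective_of_injective (hι.comp (Subtype.val_injective.comp T.equivFin.symm.injective))
      (by rintro ⟨k, rfl⟩; exact hz (himage ▸ mem_image_of_mem e (mem_univ k)))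
  rw [← himage, ← image_univ_snoc, ← cumul_comp_eq_cumulantOn f he, Fin.comp_snoc]
  rfl

theorem image_univ_castSucc (n : ℕ) :
    univ.image (Fin.castSucc : Fin (n + 1) → Fin (n + 2)) =
      insert (Fin.last n).castSucc (univ.image fun i : Fin n => i.castSucc.castSucc) := by
  have := image_univ_snoc (Fin.init (Fin.castSucc : Fin (n + 1) → Fin (n + 2)))
    (Fin.last n).castSucc
  rwa [Fin.snoc_init_self] at this

theorem univ_eq_insert_image_castSucc (n : ℕ) :
    (univ : Finset (Fin (n + 1))) = insert (Fin.last n) (univ.image Fin.castSucc) := by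
  have := image_univ_snoc (Fin.init (id : Fin (n + 1) → Fin (n + 1))) (id (Fin.last n))
  rw [Fin.snoc_init_self, image_id] at this
  exact this

theorem cumul_snoc_mul {R S : Type*} [CommRing R] [CommRing S] (f : R → S) {n : ℕ}
    (a : Fin n → R) (b c : R) :
    cumul f (n + 1) (Fin.snoc a (b * c)) =
      cumulantOn f (Function.update (Fin.snoc (Fin.snoc a b) c) (Fin.last n).castSucc (b * c))
        (univ.image Fin.castSucc) := by
  have hcomp : (Fin.snoc a (b * c) : Fin (n + 1) → R) =
      Function.update (Fin.snoc (Fin.snoc a b) c) (Fin.last n).castSucc (b * c) ∘ Fin.castSucc := by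
    funext j
    refine Fin.lastCases ?_ (fun i => ?_) j <;> simp [Function.update_of_ne]
  rw [hcomp, cumul_comp_eq_cumulantOn f (Fin.castSucc_injective _)]

end Cumulant

open Cumulant in
theorem cumulant_recursion_general (K A B : Type*) [Field K]
    [CommRing A] [Algebra K A] [CommRing B] [Algebra K B]
    (f : A →ₗ[K] B) :
    (∀ a : Fin 1 → A, cumul (⇑f) 1 a = f (a 0)) ∧
    (∀ (n : ℕ) (a : Fin n → A) (b c : A),
      cumul (⇑f) (n + 2) (Fin.snoc (Fin.snoc a b) c) =
        cumul (⇑f) (n + 1) (Fin.snoc a (b * c)) -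
          ∑ S ∈ (Finset.univ : Finset (Fin n)).powerset,
            cumul (⇑f) (S.card + 1) (Fin.snoc (restr a S) b) *
              cumul (⇑f) (Sᶜ.card + 1) (Fin.snoc (restr a Sᶜ) c)) := by
  refine ⟨fun a => ?_, fun n a b c => ?_⟩
  · have : partitionsOf 1 = {{univ}} := by decide
    simp [cumul, this]
  set aa : Fin (n + 2) → A := Fin.snoc (Fin.snoc a b) c
  set ι : Fin n → Fin (n + 2) := fun i => i.castSucc.castSucc
  have hι : Function.Injective ι := (Fin.castSucc_injective _).comp (Fin.castSucc_injective _)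
  have hx : (Fin.last n).castSucc ∉ univ.image ι := by simp [ι]
  have hy : Fin.last (n + 1) ∉ univ.image ι := by simp [ι]
  have ha : aa ∘ ι = a := funext fun i => by simp [aa, ι]
  have hterm : ∀ (S : Finset (Fin n)) {z}, z ∉ univ.image ι →
      cumul (⇑f) (#S + 1) (Fin.snoc (restr a S) (aa z)) =
        cumulantOn (⇑f) aa (insert z (S.image ι)) :=
    fun S z hz => by
      rw [← ha]
      exact cumul_snoc_restr_comp (⇑f) hι aa S (notMem_mono (image_subset_image (subset_univ S)) hz)
  rw [cumul_eq_cumulantOn, univ_eq_insert_image_castSucc, image_univ_castSucc, insert_comm,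
    cumulantOn_insert_insert (⇑f) (Fin.castSucc_lt_last _).ne hx hy, cumul_snoc_mul,
    image_univ_castSucc]
  have hb : aa (Fin.last n).castSucc = b := by simp [aa]
  have hc : aa (Fin.last (n + 1)) = c := by simp [aa]
  rw [hb, hc, powerset_image, sum_image (image_injOn_powerset_of_injOn hι.injOn)]
  refine congrArg _ (sum_congr rfl fun S _ => ?_)
  rw [← image_sdiff _ _ hι, ← compl_eq_univ_sdiff, ← hb, ← hc, hterm S hx, hterm Sᶜ hy]

/-- the cumulants of a unital linear map satisfy `κ(f)_1 = f` and the recursion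
`κ(f)_{n+2}(a_1,…,a_n,b,c) = κ(f)_{n+1}(a_1,…,a_n,bc)
  − Σ_{S ⊆ {1,…,n}} κ(f)_{|S|+1}((a_i)_{i∈S},b) · κ(f)_{n−|S|+1}((a_j)_{j∉S},c)`. -/
theorem cumulant_recursion (K A B : Type*) [Field K] [CharZero K]
    [CommRing A] [Algebra K A] [CommRing B] [Algebra K B]
    (f : A →ₗ[K] B) (hf : f 1 = 1) :
    (∀ a : Fin 1 → A, cumul (⇑f) 1 a = f (a 0)) ∧
    (∀ (n : ℕ) (a : Fin n → A) (b c : A),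
      cumul (⇑f) (n + 2) (Fin.snoc (Fin.snoc a b) c) =
        cumul (⇑f) (n + 1) (Fin.snoc a (b * c)) -
          ∑ S ∈ (Finset.univ : Finset (Fin n)).powerset,
            cumul (⇑f) (S.card + 1) (Fin.snoc (restr a S) b) *
              cumul (⇑f) (Sᶜ.card + 1) (Fin.snoc (restr a Sᶜ) c)) :=
  cumulant_recursion_general K A B f
end

section
/- A K-linear map f : A → B with f(1)=1 between commutative unital K-algebras is a homomorphism of K-algebras (i.e. f(ab)=f(a)f(b) for all a,b ∈ A) if and only if the cumulant κ(f)_n vanishes identically for every n ≥ 2. -/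
open Finset

/-!
If `f` is multiplicative, each partition `P` of `{0, …, n-1}` contributes
`c(|P|) • ∏ᵢ f (aᵢ)` to `κ(f)_n`, with `c(k) = (-1)^(k-1) (k-1)!`, so it suffices that
`∑_P c(|P|) = 0` for `n ≥ 2`. Adjoining a new point `a` to a partition `Q` either opens the new
block `{a}` or enlarges one of the `|Q|` blocks, whence
`∑_{P ⊢ insert a u} c(|P|) = ∑_{Q ⊢ u} (c(|Q|+1) + |Q| c(|Q|))`, and every summand vanishes since
`c(k+1) = -k c(k)`. Conversely `κ(f)_2(x, y) = f(xy) - f(x) f(y)`.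
-/

section SetPartitions

variable {α : Type*} [DecidableEq α] {u v : Finset α} {P Q R : Finset (Finset α)}
  {s t : Finset α} {a : α}

def setPartitions (u : Finset α) : Finset (Finset (Finset α)) :=
  u.powerset.powerset.filter fun P =>
    (∀ s ∈ P, s.Nonempty) ∧ (∀ s ∈ P, ∀ t ∈ P, s ≠ t → s ∩ t = ∅) ∧ P.sup id = u

theorem partitionsOf_eq_setPartitions_univ (n : ℕ) : partitionsOf n = setPartitions univ := by
  ext P
  simp only [partitionsOf, setPartitions, mem_filter]

theorem mem_setPartitions :
    P ∈ setPartitions u ↔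
      (∀ s ∈ P, s.Nonempty) ∧ (∀ s ∈ P, ∀ t ∈ P, s ≠ t → s ∩ t = ∅) ∧ P.sup id = u := by
  refine mem_filter.trans (and_iff_right_of_imp fun h => mem_powerset.2 fun s hs => ?_)
  rw [mem_powerset, ← h.2.2]
  exact le_sup (f := id) hs

theorem subset_of_mem_setPartitions (hP : P ∈ setPartitions u) (hs : s ∈ P) : s ⊆ u :=
  (mem_setPartitions.1 hP).2.2 ▸ le_sup (f := id) hs

theorem subset_of_mem_insert_empty (hQ : Q ∈ setPartitions u) (hs : s ∈ insert ∅ Q) :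
    s ⊆ u := by
  rcases mem_insert.1 hs with rfl | hs
  exacts [empty_subset u, subset_of_mem_setPartitions hQ hs]

theorem empty_notMem_of_mem_setPartitions (hP : P ∈ setPartitions u) : ∅ ∉ P :=
  fun h => not_nonempty_empty ((mem_setPartitions.1 hP).1 ∅ h)

theorem eq_of_mem_of_mem_setPartitions (hP : P ∈ setPartitions u) (hs : s ∈ P) (ht : t ∈ P)
    (has : a ∈ s) (hat : a ∈ t) : s = t := by
  by_contra hst
  simpa [(mem_setPartitions.1 hP).2.1 s hs t ht hst] using mem_inter.2 ⟨has, hat⟩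

theorem card_pos_of_mem_setPartitions (hP : P ∈ setPartitions u) (hu : u.Nonempty) :
    0 < P.card := by
  refine card_pos.2 (nonempty_iff_ne_empty.2 fun h => hu.ne_empty ?_)
  rw [← (mem_setPartitions.1 hP).2.2, h, sup_empty]
  rfl

theorem prod_prod_of_mem_setPartitions {M : Type*} [CommMonoid M] (hP : P ∈ setPartitions u)
    (g : α → M) : ∏ s ∈ P, ∏ i ∈ s, g i = ∏ i ∈ u, g i := by
  obtain ⟨-, hdisj, hsup⟩ := mem_setPartitions.1 hP
  rw [← prod_biUnion fun s hs t ht hst => disjoint_iff_inter_eq_empty.2 (hdisj s hs t ht hst),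
    ← sup_eq_biUnion]
  exact congrArg (∏ i ∈ ·, g i) hsup

theorem erase_mem_setPartitions (hQ : Q ∈ setPartitions u) (hs : s ∈ insert ∅ Q) :
    Q.erase s ∈ setPartitions (u \ s) := by
  obtain ⟨hne, hdisj, hsup⟩ := mem_setPartitions.1 hQ
  refine mem_setPartitions.2 ⟨fun t ht => hne t (mem_of_mem_erase ht),
    fun t ht t' ht' => hdisj t (mem_of_mem_erase ht) t' (mem_of_mem_erase ht'), ?_⟩
  rcases mem_insert.1 hs with rfl | hs
  · rw [erase_eq_of_notMem (empty_notMem_of_mem_setPartitions hQ), sdiff_empty, hsup]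
  · have hdisj_sup : Disjoint s ((Q.erase s).sup id) :=
      Finset.disjoint_sup_right.2 fun t ht => disjoint_iff_inter_eq_empty.2 <|
        hdisj s hs t (mem_of_mem_erase ht) (ne_of_mem_erase ht).symm
    rw [← hsup, ← insert_erase hs, sup_insert, erase_insert_eq_erase, erase_idem]
    exact (union_sdiff_cancel_left hdisj_sup).symm

theorem insert_mem_setPartitions (hR : R ∈ setPartitions v) (ht : t.Nonempty)
    (hdisj : ∀ c ∈ R, t ∩ c = ∅) : insert t R ∈ setPartitions (t ∪ v) := by
  obtain ⟨hne, hRdisj, hsup⟩ := mem_setPartitions.1 hR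
  refine mem_setPartitions.2 ⟨?_, ?_, by rw [sup_insert, hsup]; rfl⟩
  · simpa [ht] using hne
  · simp only [mem_insert]
    rintro b (rfl | hb) c (rfl | hc) hbc
    · exact absurd rfl hbc
    · exact hdisj c hc
    · rw [inter_comm]; exact hdisj b hb
    · exact hRdisj b hb c hc hbc

def blockOf (P : Finset (Finset α)) (a : α) : Finset α :=
  (P.filter (a ∈ ·)).sup id

theorem blockOf_eq (hP : P ∈ setPartitions u) (hs : s ∈ P) (has : a ∈ s) : blockOf P a = s := by
  have : P.filter (a ∈ ·) = {s} := eq_singleton_iff_unique_mem.2 ⟨mem_filter.2 ⟨hs, has⟩,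
    fun t ht => eq_of_mem_of_mem_setPartitions hP (mem_filter.1 ht).1 hs (mem_filter.1 ht).2 has⟩
  rw [blockOf, this, sup_singleton]
  rfl

theorem blockOf_mem (hP : P ∈ setPartitions u) (ha : a ∈ u) :
    blockOf P a ∈ P ∧ a ∈ blockOf P a := by
  rw [← (mem_setPartitions.1 hP).2.2, mem_sup] at ha
  obtain ⟨s, hs, has⟩ := ha
  rw [blockOf_eq hP hs has]
  exact ⟨hs, has⟩

/-- Adds `a` to the block `s` of `Q`; for `s = ∅` this adds the new block `{a}`. -/
def insertIntoBlock (a : α) (Q : Finset (Finset α)) (s : Finset α) : Finset (Finset α) :=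
  insert (insert a s) (Q.erase s)

/-- The final `erase ∅` discards the block of `a` if it was `{a}`. -/
def eraseFromBlocks (a : α) (P : Finset (Finset α)) : Finset (Finset α) :=
  (insert ((blockOf P a).erase a) (P.erase (blockOf P a))).erase ∅

theorem insertIntoBlock_mem (ha : a ∉ u) (hQ : Q ∈ setPartitions u) (hs : s ∈ insert ∅ Q) :
    insertIntoBlock a Q s ∈ setPartitions (insert a u) := by
  have hR := erase_mem_setPartitions hQ hs
  have hdisj : ∀ c ∈ Q.erase s, insert a s ∩ c = ∅ := fun c hc => by
    have hcu := subset_of_mem_setPartitions hR hc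
    grind
  have := insert_mem_setPartitions hR (insert_nonempty a s) hdisj
  rwa [insert_union, union_sdiff_of_subset (subset_of_mem_insert_empty hQ hs)] at this

theorem eraseFromBlocks_mem (ha : a ∉ u) (hP : P ∈ setPartitions (insert a u)) :
    eraseFromBlocks a P ∈ setPartitions u := by
  obtain ⟨hB, haB⟩ := blockOf_mem hP (mem_insert_self a u)
  set B := blockOf P a
  have hR := erase_mem_setPartitions hP (mem_insert_of_mem hB)
  have hBu := subset_of_mem_setPartitions hP hB
  have hu : B.erase a ∪ (insert a u \ B) = u := by grind
  by_cases ht : B.erase a = ∅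
  · rw [ht, empty_union] at hu
    rwa [eraseFromBlocks, ht, erase_insert_eq_erase,
      erase_eq_of_notMem (empty_notMem_of_mem_setPartitions hR), ← hu]
  · have hdisj : ∀ c ∈ P.erase B, B.erase a ∩ c = ∅ := fun c hc => by
      have hcu := subset_of_mem_setPartitions hR hc
      grind
    have := insert_mem_setPartitions hR (nonempty_iff_ne_empty.2 ht) hdisj
    rwa [eraseFromBlocks, erase_eq_of_notMem, ← hu]
    rw [mem_insert, not_or]
    exact ⟨Ne.symm ht, empty_notMem_of_mem_setPartitions hR⟩

theorem erase_blockOf_mem_insert_empty (a : α) (P : Finset (Finset α)) :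
    (blockOf P a).erase a ∈ insert ∅ (eraseFromBlocks a P) := by
  simp only [eraseFromBlocks, mem_insert, mem_erase, true_or, and_true]
  tauto

theorem insertIntoBlock_eraseFromBlocks (hP : P ∈ setPartitions (insert a u)) :
    insertIntoBlock a (eraseFromBlocks a P) ((blockOf P a).erase a) = P := by
  obtain ⟨hB, haB⟩ := blockOf_mem hP (mem_insert_self a u)
  set B := blockOf P a
  have hnotMem : B.erase a ∉ P.erase B := fun h => by
    obtain ⟨x, hx⟩ := (mem_setPartitions.1 hP).1 _ (mem_of_mem_erase h)
    exact ne_of_mem_erase h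
      (eq_of_mem_of_mem_setPartitions hP (mem_of_mem_erase h) hB hx (mem_of_mem_erase hx))
  rw [insertIntoBlock, eraseFromBlocks, insert_erase haB, erase_right_comm,
    erase_insert_eq_erase, erase_eq_of_notMem hnotMem,
    erase_eq_of_notMem fun h => empty_notMem_of_mem_setPartitions hP (mem_of_mem_erase h),
    insert_erase hB]

theorem blockOf_insertIntoBlock (ha : a ∉ u) (hQ : Q ∈ setPartitions u)
    (hs : s ∈ insert ∅ Q) : blockOf (insertIntoBlock a Q s) a = insert a s :=
  blockOf_eq (insertIntoBlock_mem ha hQ hs) (mem_insert_self _ _) (mem_insert_self a s)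

theorem eraseFromBlocks_insertIntoBlock (ha : a ∉ u) (hQ : Q ∈ setPartitions u)
    (hs : s ∈ insert ∅ Q) : eraseFromBlocks a (insertIntoBlock a Q s) = Q := by
  have has : a ∉ s := fun h => ha (subset_of_mem_insert_empty hQ hs h)
  have hnotMem : insert a s ∉ Q.erase s := fun h =>
    ha (subset_of_mem_setPartitions hQ (mem_of_mem_erase h) (mem_insert_self a s))
  rw [eraseFromBlocks, blockOf_insertIntoBlock ha hQ hs, erase_insert has, insertIntoBlock,
    erase_insert hnotMem]
  have hQ_empty := empty_notMem_of_mem_setPartitions hQ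
  rcases mem_insert.1 hs with rfl | hs
  · rw [erase_eq_of_notMem hQ_empty, erase_insert hQ_empty]
  · rw [insert_erase hs, erase_eq_of_notMem hQ_empty]

theorem card_insertIntoBlock (ha : a ∉ u) (hQ : Q ∈ setPartitions u) :
    (insertIntoBlock a Q s).card = (Q.erase s).card + 1 :=
  card_insert_of_notMem fun h =>
    ha (subset_of_mem_setPartitions hQ (mem_of_mem_erase h) (mem_insert_self a s))

theorem sum_setPartitions_insert {M : Type*} [AddCommMonoid M] (ha : a ∉ u)
    (g : Finset (Finset α) → M) :
    ∑ P ∈ setPartitions (insert a u), g P =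
      ∑ Q ∈ setPartitions u, ∑ s ∈ insert ∅ Q, g (insertIntoBlock a Q s) := by
  rw [sum_sigma']
  refine sum_nbij' (fun P => ⟨eraseFromBlocks a P, (blockOf P a).erase a⟩)
    (fun x => insertIntoBlock a x.1 x.2) (fun P hP => ?_) (fun x hx => ?_) (fun P hP => ?_)
    (fun x hx => ?_) (fun P hP => ?_)
  · exact mem_sigma.2 ⟨eraseFromBlocks_mem ha hP, erase_blockOf_mem_insert_empty a P⟩
  · exact insertIntoBlock_mem ha (mem_sigma.1 hx).1 (mem_sigma.1 hx).2
  · exact insertIntoBlock_eraseFromBlocks hP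
  · obtain ⟨hQ, hs⟩ := mem_sigma.1 hx
    have has : a ∉ x.2 := fun h => ha (subset_of_mem_insert_empty hQ hs h)
    simp only [eraseFromBlocks_insertIntoBlock ha hQ hs, blockOf_insertIntoBlock ha hQ hs,
      erase_insert has]
  · rw [insertIntoBlock_eraseFromBlocks hP]

theorem sum_setPartitions_insert_card {M : Type*} [AddCommMonoid M] (ha : a ∉ u) (w : ℕ → M) :
    ∑ P ∈ setPartitions (insert a u), w P.card =
      ∑ Q ∈ setPartitions u, (w (Q.card + 1) + Q.card • w Q.card) := by
  rw [sum_setPartitions_insert ha]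
  refine sum_congr rfl fun Q hQ => ?_
  have hQ_empty := empty_notMem_of_mem_setPartitions hQ
  rw [sum_insert hQ_empty, card_insertIntoBlock ha hQ, erase_eq_of_notMem hQ_empty,
    sum_congr rfl fun s hs => by rw [card_insertIntoBlock ha hQ, card_erase_add_one hs],
    sum_const]

end SetPartitions

open Nat in
def cumulantCoeff (k : ℕ) : ℤ := (-1) ^ (k - 1) * (k - 1)!

theorem cumulantCoeff_succ_add_nsmul {k : ℕ} (hk : 0 < k) :
    cumulantCoeff (k + 1) + k • cumulantCoeff k = 0 := by
  obtain ⟨j, rfl⟩ := Nat.exists_eq_add_of_lt hk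
  simp only [cumulantCoeff, nsmul_eq_mul, Nat.add_sub_cancel, zero_add, Nat.factorial_succ]
  push_cast
  ring

theorem sum_cumulantCoeff_card_setPartitions {α : Type*} [DecidableEq α] {u : Finset α}
    (hu : 1 < u.card) : ∑ P ∈ setPartitions u, cumulantCoeff P.card = 0 := by
  obtain ⟨a, ha⟩ := card_pos.1 (zero_lt_one.trans hu)
  have hrest : (u.erase a).Nonempty := by
    rw [← card_pos, card_erase_of_mem ha]
    omega
  rw [← insert_erase ha, sum_setPartitions_insert_card (notMem_erase a u)]
  exact sum_eq_zero fun Q hQ =>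
    cumulantCoeff_succ_add_nsmul (card_pos_of_mem_setPartitions hQ hrest)

theorem map_prod_of_nonempty {ι M N F : Type*} [CommMonoid M] [CommMonoid N] [FunLike F M N]
    [MulHomClass F M N] (f : F) (g : ι → M) {s : Finset ι} (hs : s.Nonempty) :
    f (∏ i ∈ s, g i) = ∏ i ∈ s, f (g i) := by
  rw [prod_eq_multiset_prod, prod_eq_multiset_prod,
    map_multiset_ne_zero_prod f (by simpa using hs.ne_empty), Multiset.map_map]
  rfl

section Cumulants

variable {R S : Type*} [CommRing R] [CommRing S]

theorem cumul_eq_sum_setPartitions (f : R → S) (n : ℕ) (a : Fin n → R) :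
    cumul f n a =
      ∑ P ∈ setPartitions univ, cumulantCoeff P.card • ∏ s ∈ P, f (∏ i ∈ s, a i) := by
  rw [cumul, partitionsOf_eq_setPartitions_univ]
  rfl

theorem cumul_eq_zero_of_map_mul {f : R → S} (hf : ∀ x y, f (x * y) = f x * f y) {n : ℕ}
    (hn : 2 ≤ n) (a : Fin n → R) : cumul f n a = 0 := by
  let φ : R →ₙ* S := ⟨f, hf⟩
  have hblocks : ∀ P ∈ setPartitions (univ : Finset (Fin n)),
      ∏ s ∈ P, f (∏ i ∈ s, a i) = ∏ i, f (a i) := fun P hP => by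
    rw [← prod_prod_of_mem_setPartitions hP]
    exact prod_congr rfl fun s hs =>
      map_prod_of_nonempty φ a ((mem_setPartitions.1 hP).1 s hs)
  rw [cumul_eq_sum_setPartitions, sum_congr rfl fun P hP => by rw [hblocks P hP], ← sum_smul,
    sum_cumulantCoeff_card_setPartitions (by rwa [card_fin]), zero_smul]

theorem cumul_two (f : R → S) (x y : R) : cumul f 2 ![x, y] = f (x * y) - f x * f y := by
  have hpart : partitionsOf 2 = {{univ}, {{0}, {1}}} := by decide
  rw [cumul, hpart, sum_pair (by decide), prod_pair (by decide)]
  simp [card_pair (by decide : ({0} : Finset (Fin 2)) ≠ {1}), sub_eq_add_neg]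

end Cumulants

theorem algHom_iff_cumulants_vanish_general (K A B : Type*) [Field K]
    [CommRing A] [Algebra K A] [CommRing B] [Algebra K B]
    (f : A →ₗ[K] B) :
    (∀ a b : A, f (a * b) = f a * f b) ↔
      (∀ n : ℕ, 2 ≤ n → ∀ a : Fin n → A, cumul (⇑f) n a = 0) :=
  ⟨fun hmul _ hn a => cumul_eq_zero_of_map_mul hmul hn a,
    fun h x y => sub_eq_zero.1 ((cumul_two f x y).symm.trans (h 2 le_rfl ![x, y]))⟩

/-- a unital linear map `f : A → B` is an algebra homomorphism if and only if
all its higher cumulants `κ(f)_n`, `n ≥ 2`, vanish identically. -/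
theorem algHom_iff_cumulants_vanish (K A B : Type*) [Field K] [CharZero K]
    [CommRing A] [Algebra K A] [CommRing B] [Algebra K B]
    (f : A →ₗ[K] B) (hf : f 1 = 1) :
    (∀ a b : A, f (a * b) = f a * f b) ↔
      (∀ n : ℕ, 2 ≤ n → ∀ a : Fin n → A, cumul (⇑f) n a = 0) :=
  algHom_iff_cumulants_vanish_general K A B f
end

section
/- Let Δ : A → A be a K-linear endomorphism with Δ(1)=0 of a commutative unital K-algebra A, and let k ≥ 1. If the Koszul bracket K(Δ)_{k+1} vanishes identically, then K(Δ)_n vanishes identically for every n ≥ k+1 (i.e. Δ is a differential operator of order ≤ k). -/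
/-!
Twist the Koszul sum by an extra factor `b` inside `D`:
`G_s(a; b) = Σ_{t ⊆ s} (-1)^{|s|-|t|} D(b ∏_t a) ∏_{s∖t} a`, so that `K(D)_n(a) = G_n(a; 1)`
when `D 1 = 0`. Splitting off one variable `x` gives `G_{n+1}(a, x; b) = G_n(a; x b) - x G_n(a; b)`.
At `b = 1` the vanishing of `K(D)_{k+1}` thus says `G_k(a; x) = x G_k(a; 1)`, and then
`G_{k+1}(a, x; b) = x b G_k(a; 1) - x b G_k(a; 1) = 0`; the same recursion carries `G ≡ 0` from
`n` to `n + 1`.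
-/

open Finset

/-- The `n`-th Koszul bracket of an operator `D` on a commutative ring. -/
noncomputable def koszul {R : Type*} [CommRing R] (D : R → R) (n : ℕ) (a : Fin n → R) : R :=
  ∑ s ∈ (Finset.univ : Finset (Fin n)).powerset.filter fun s => s.Nonempty,
    (-1 : ℤ) ^ (n - s.card) • (D (∏ i ∈ s, a i) * ∏ i ∈ sᶜ, a i)

section TwistedKoszul

variable {ι κ R : Type*} [DecidableEq ι] [CommRing R] (D : R → R)

noncomputable def twistedKoszul (s : Finset ι) (a : ι → R) (b : R) : R :=
  ∑ t ∈ s.powerset, (-1 : ℤ) ^ (#s - #t) • (D (b * ∏ i ∈ t, a i) * ∏ i ∈ s \ t, a i)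

theorem twistedKoszul_insert {s : Finset ι} {i : ι} (hi : i ∉ s) (a : ι → R) (b : R) :
    twistedKoszul D (insert i s) a b =
      twistedKoszul D s a (a i * b) - a i * twistedKoszul D s a b := by
  have hcard : ∀ t ∈ s.powerset, #t ≤ #s := fun t ht => card_le_card (mem_powerset.mp ht)
  have hnot : ∀ t ∈ s.powerset, i ∉ t := fun t ht => notMem_mono (mem_powerset.mp ht) hi
  rw [twistedKoszul, sum_powerset_insert hi, add_comm, sub_eq_add_neg, twistedKoszul,
    twistedKoszul, mul_sum, ← sum_neg_distrib]
  congr 1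
  · refine sum_congr rfl fun t ht => ?_
    rw [card_insert_of_notMem hi, card_insert_of_notMem (hnot t ht), prod_insert (hnot t ht),
      insert_sdiff_insert, sdiff_insert_of_notMem hi, Nat.add_sub_add_right, ← mul_assoc,
      mul_comm b (a i)]
  · refine sum_congr rfl fun t ht => ?_
    rw [card_insert_of_notMem hi, insert_sdiff_of_notMem _ (hnot t ht), prod_insert
      (notMem_sdiff_of_notMem_left hi), Nat.sub_add_comm (hcard t ht), pow_succ]
    simp only [zsmul_eq_mul]
    push_cast
    ring

theorem twistedKoszul_map [DecidableEq κ] (f : κ ↪ ι) (s : Finset κ) (a : ι → R) (b : R) :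
    twistedKoszul D (s.map f) a b = twistedKoszul D s (a ∘ f) b := by
  rw [twistedKoszul, map_eq_image, powerset_image,
    sum_image fun t _ u _ h => image_injective f.injective h]
  refine sum_congr rfl fun t _ => ?_
  rw [← image_sdiff _ _ f.injective, card_image_of_injective _ f.injective,
    card_image_of_injective _ f.injective, prod_image f.injective.injOn,
    prod_image f.injective.injOn]
  rfl

theorem twistedKoszul_univ_succ {n : ℕ} (a : Fin (n + 1) → R) (b : R) :
    twistedKoszul D univ a b =
      twistedKoszul D univ (a ∘ Fin.castSucc) (a (Fin.last n) * b) -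
        a (Fin.last n) * twistedKoszul D univ (a ∘ Fin.castSucc) b := by
  rw [Fin.univ_castSuccEmb, cons_eq_insert, twistedKoszul_insert, twistedKoszul_map,
    twistedKoszul_map]
  · rfl
  · simp

theorem koszul_eq_twistedKoszul_one (hD : D 1 = 0) {n : ℕ} (a : Fin n → R) :
    koszul D n a = twistedKoszul D univ a 1 := by
  rw [koszul, sum_filter_of_ne]
  · refine sum_congr rfl fun s _ => ?_
    rw [one_mul, compl_eq_univ_sdiff, card_univ, Fintype.card_fin]
  · rintro s - hs
    refine nonempty_iff_ne_empty.mpr fun hempty => hs ?_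
    simp [hempty, hD]

variable {D}

theorem twistedKoszul_eq_mul_of_koszul_eq_zero (hD : D 1 = 0) {n : ℕ}
    (h : ∀ a : Fin (n + 1) → R, koszul D (n + 1) a = 0) (a : Fin n → R) (b : R) :
    twistedKoszul D univ a b = b * twistedKoszul D univ a 1 := by
  have hsnoc := twistedKoszul_univ_succ D (Fin.snoc a b) 1
  rw [← koszul_eq_twistedKoszul_one D hD, h, eq_comm, sub_eq_zero] at hsnoc
  simpa using hsnoc

theorem twistedKoszul_eq_zero_of_koszul_eq_zero (hD : D 1 = 0) {n : ℕ}
    (h : ∀ a : Fin (n + 1) → R, koszul D (n + 1) a = 0) (a : Fin (n + 1) → R) (b : R) :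
    twistedKoszul D univ a b = 0 := by
  rw [twistedKoszul_univ_succ, twistedKoszul_eq_mul_of_koszul_eq_zero hD h,
    twistedKoszul_eq_mul_of_koszul_eq_zero hD h _ b]
  ring

theorem twistedKoszul_eq_zero_of_le {m n : ℕ}
    (h : ∀ (a : Fin m → R) (b : R), twistedKoszul D univ a b = 0) (hmn : m ≤ n)
    (a : Fin n → R) (b : R) : twistedKoszul D univ a b = 0 := by
  induction n, hmn using Nat.le_induction generalizing b with
  | base => exact h a b
  | succ n _ ih => rw [twistedKoszul_univ_succ, ih, ih, mul_zero, sub_zero]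

end TwistedKoszul

theorem koszul_vanishing_upward_general (K A : Type*) [Field K]
    [CommRing A] [Algebra K A] (Δ : A →ₗ[K] A) (hΔ : Δ 1 = 0) (k : ℕ)
    (hvan : ∀ a : Fin (k + 1) → A, koszul (⇑Δ) (k + 1) a = 0) :
    ∀ n : ℕ, k + 1 ≤ n → ∀ a : Fin n → A, koszul (⇑Δ) n a = 0 := by
  intro n hn a
  rw [koszul_eq_twistedKoszul_one _ hΔ]
  exact twistedKoszul_eq_zero_of_le (twistedKoszul_eq_zero_of_koszul_eq_zero hΔ hvan) hn a 1

/-- if `K(Δ)_{k+1}` vanishes identically (with `k ≥ 1`) then `K(Δ)_n`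
vanishes identically for every `n ≥ k+1`, i.e. `Δ` is a differential operator of
order ≤ k. -/
theorem koszul_vanishing_upward (K A : Type*) [Field K] [CharZero K]
    [CommRing A] [Algebra K A] (Δ : A →ₗ[K] A) (hΔ : Δ 1 = 0) (k : ℕ) (hk : 1 ≤ k)
    (hvan : ∀ a : Fin (k + 1) → A, koszul (⇑Δ) (k + 1) a = 0) :
    ∀ n : ℕ, k + 1 ≤ n → ∀ a : Fin n → A, koszul (⇑Δ) n a = 0 :=
  koszul_vanishing_upward_general K A Δ hΔ k hvan
end

section
/- Let Δ, Δ′ : A → A be K-linear endomorphisms with Δ(1)=Δ′(1)=0 of a commutative unital K-algebra A. Then for every n ≥ 1 and all a_1,…,a_n ∈ A: K(Δ∘Δ′ − Δ′∘Δ)_n(a_1,…,a_n) = Σ_{i=1}^{n} Σ_{S⊆{1,…,n}, |S|=i} [ K(Δ)_{n−i+1}(K(Δ′)_i((a_s)_{s∈S}), (a_j)_{j∉S}) − K(Δ′)_{n−i+1}(K(Δ)_i((a_s)_{s∈S}), (a_j)_{j∉S}) ]. (This is the Taylor-coefficient form of the statement that Δ ↦ K(Δ) is a morphism of Lie algebras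 from endomorphisms vanishing on 1, with the commutator bracket, to coderivations of the symmetric coalgebra, with the commutator bracket.) -/
open Finset

/-!
Write `k_D(s)` for the Koszul bracket of `D` on the subfamily `(a_i)_{i ∈ s}`. Möbius inversion
on the lattice of subsets gives `D(a_s) = Σ_{t ⊆ s} k_D(t) a_{s∖t}`. Expanding in the first slot,
`K(Δ)_{m+1}(b, (a_j)_{j ∉ S})` is the bracket of `x ↦ Δ(b x)` on `Sᶜ` minus `b k_Δ(Sᶜ)`.
With `b = k_{Δ'}(S)`, the second parts sum to `Σ_S k_{Δ'}(S) k_Δ(Sᶜ)`, which is symmetric in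
`Δ, Δ'` under `S ↦ Sᶜ` and cancels in the commutator. In the first parts, regroup by
`V = S ∪ U`: they become `Σ_V ± Δ(Σ_{S ⊆ V} k_{Δ'}(S) a_{V∖S}) a_{Vᶜ}`, which the inversion
formula turns into `k_{ΔΔ'}` of the whole family.
-/

theorem Finset.sum_powerset_sum_powerset_sdiff {α M : Type*} [DecidableEq α] [AddCommMonoid M]
    (w : Finset α) (f : Finset α → Finset α → M) :
    ∑ S ∈ w.powerset, ∑ U ∈ (w \ S).powerset, f S U =
      ∑ V ∈ w.powerset, ∑ S ∈ V.powerset, f S (V \ S) := by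
  have hinner : ∀ S ∈ w.powerset,
      ∑ U ∈ (w \ S).powerset, f S U = ∑ V ∈ Icc S w, f S (V \ S) := by
    intro S hS
    rw [Icc_eq_image_powerset (mem_powerset.mp hS), sum_image]
    · refine sum_congr rfl fun U hU => ?_
      rw [union_sdiff_cancel_left (disjoint_sdiff.mono_right (mem_powerset.mp hU))]
    · intro U hU U' hU' h
      simpa [union_sdiff_cancel_left (disjoint_sdiff.mono_right (mem_powerset.mp hU)),
        union_sdiff_cancel_left (disjoint_sdiff.mono_right (mem_powerset.mp hU'))]
        using congrArg (· \ S) h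
  rw [sum_congr rfl hinner]
  exact sum_comm' fun S V => by
    simp only [mem_powerset, mem_Icc]
    exact ⟨fun ⟨_, h₁, h₂⟩ => ⟨h₁, h₂⟩, fun ⟨h₁, h₂⟩ => ⟨h₁.trans h₂, h₁, h₂⟩⟩

theorem Finset.sum_Icc_sum_card_eq_sum {α M : Type*} [Fintype α] [AddCommMonoid M]
    {f : Finset α → M} (hf : f ∅ = 0) {n : ℕ} (hn : Fintype.card α ≤ n) :
    ∑ i ∈ Icc 1 n, ∑ S ∈ univ.powerset.filter (fun S => #S = i), f S = ∑ S, f S := by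
  rw [sum_fiberwise_eq_sum_filter, sum_filter_of_ne, powerset_univ]
  intro S _ hS
  have hS_ne : S ≠ ∅ := by
    rintro rfl
    exact hS hf
  exact mem_Icc.mpr ⟨card_pos.mpr (nonempty_iff_ne_empty.mpr hS_ne), (card_le_univ S).trans hn⟩

section KoszulOn

variable {α A : Type*} [DecidableEq α] [CommRing A]

/-- The Koszul bracket of `D` on the subfamily `(a_i)_{i ∈ s}`. The sum also runs over `t = ∅`,
so this agrees with `koszul` only when `D 1 = 0`. -/
noncomputable def koszulOn (D : A → A) (a : α → A) (s : Finset α) : A :=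
  ∑ t ∈ s.powerset, (-1 : ℤ) ^ #(s \ t) • (D (∏ i ∈ t, a i) * ∏ i ∈ s \ t, a i)

@[simp]
theorem koszulOn_empty (D : A → A) (a : α → A) : koszulOn D a ∅ = D 1 := by
  simp [koszulOn]

theorem koszulOn_sub (D D' : A → A) (a : α → A) (s : Finset α) :
    koszulOn (D - D') a s = koszulOn D a s - koszulOn D' a s := by
  simp only [koszulOn, Pi.sub_apply, sub_mul, smul_sub, sum_sub_distrib]

theorem koszulOn_map {β : Type*} [DecidableEq β] (D : A → A) (a : α → A) (f : β ↪ α)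
    (s : Finset β) : koszulOn D a (s.map f) = koszulOn D (a ∘ f) s := by
  rw [koszulOn, map_eq_image, powerset_image,
    sum_image fun t _ t' _ h => image_injective f.injective h]
  refine sum_congr rfl fun t _ => ?_
  rw [← image_sdiff _ _ f.injective, card_image_of_injective _ f.injective,
    prod_image f.injective.injOn, prod_image f.injective.injOn]
  rfl

theorem koszulOn_insert (D : A → A) (a : α → A) {s : Finset α} {j : α} (hj : j ∉ s) :
    koszulOn D a (insert j s) = koszulOn (fun x => D (a j * x)) a s - a j * koszulOn D a s := by
  have hjt : ∀ t ∈ s.powerset, j ∉ t := fun t ht => notMem_mono (mem_powerset.mp ht) hj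
  rw [koszulOn, sum_powerset_insert hj, add_comm, sub_eq_add_neg, koszulOn, koszulOn, mul_sum,
    ← sum_neg_distrib]
  congr 1
  · refine sum_congr rfl fun t ht => ?_
    rw [insert_sdiff_insert, sdiff_insert_of_notMem hj, prod_insert (hjt t ht)]
  · refine sum_congr rfl fun t ht => ?_
    rw [insert_sdiff_of_notMem _ (hjt t ht), card_insert_of_notMem (notMem_mono sdiff_subset hj),
      prod_insert (notMem_mono sdiff_subset hj), pow_succ]
    simp only [mul_smul_comm, mul_neg_one, neg_smul]
    ring_nf

theorem sum_koszulOn_mul_prod_sdiff (D : A → A) (a : α → A) (s : Finset α) :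
    ∑ t ∈ s.powerset, koszulOn D a t * ∏ i ∈ s \ t, a i = D (∏ i ∈ s, a i) := by
  calc ∑ t ∈ s.powerset, koszulOn D a t * ∏ i ∈ s \ t, a i
      = ∑ t ∈ s.powerset, ∑ u ∈ t.powerset, (-1 : ℤ) ^ #(t \ u) •
          (D (∏ i ∈ u, a i) * ((∏ i ∈ t \ u, a i) * ∏ i ∈ (s \ u) \ (t \ u), a i)) := by
        refine sum_congr rfl fun t ht => ?_
        rw [koszulOn, sum_mul]
        refine sum_congr rfl fun u hu => ?_
        rw [sdiff_sdiff_sdiff_cancel_right (mem_powerset.mp hu), smul_mul_assoc, mul_assoc]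
    _ = ∑ u ∈ s.powerset, ∑ x ∈ (s \ u).powerset, (-1 : ℤ) ^ #x •
          (D (∏ i ∈ u, a i) * ((∏ i ∈ x, a i) * ∏ i ∈ (s \ u) \ x, a i)) :=
        (sum_powerset_sum_powerset_sdiff s fun u x => (-1 : ℤ) ^ #x •
          (D (∏ i ∈ u, a i) * ((∏ i ∈ x, a i) * ∏ i ∈ (s \ u) \ x, a i))).symm
    _ = ∑ u ∈ s.powerset, (∑ x ∈ (s \ u).powerset, (-1 : ℤ) ^ #x) •
          (D (∏ i ∈ u, a i) * ∏ i ∈ s \ u, a i) := by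
        refine sum_congr rfl fun u _ => ?_
        rw [sum_smul]
        refine sum_congr rfl fun x hx => ?_
        rw [mul_comm (∏ i ∈ x, a i), prod_sdiff (mem_powerset.mp hx)]
    _ = D (∏ i ∈ s, a i) := by
        rw [sum_eq_single_of_mem s (mem_powerset_self s)]
        · simp
        · intro u hu hne
          rw [sum_powerset_neg_one_pow_card_of_nonempty, zero_smul]
          exact sdiff_nonempty.mpr fun h => hne (subset_antisymm (mem_powerset.mp hu) h)

theorem koszulOn_restr (D : A → A) (a : α → A) (s : Finset α) :
    koszulOn D (restr a s) univ = koszulOn D a s := by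
  have hs :
      univ.map (s.equivFin.symm.toEmbedding.trans (Function.Embedding.subtype (· ∈ s))) = s := by
    rw [← map_map, univ_map_equiv_to_embedding, univ_eq_attach, attach_map_val]
  conv_rhs => rw [← hs, koszulOn_map]
  rfl

theorem koszul_eq_koszulOn {D : A → A} (hD : D 1 = 0) {n : ℕ} (a : Fin n → A) :
    koszul D n a = koszulOn D a univ := by
  rw [koszul, koszulOn, sum_filter_of_ne]
  · refine sum_congr rfl fun s _ => ?_
    rw [← compl_eq_univ_sdiff, card_compl, Fintype.card_fin]
  · intro s _ hs
    rw [nonempty_iff_ne_empty]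
    rintro rfl
    simp [hD] at hs

theorem koszul_cons {D : A → A} (hD : D 1 = 0) {m : ℕ} (b : A) (c : Fin m → A) :
    koszul D (m + 1) (Fin.cons b c) =
      koszulOn (fun x => D (b * x)) c univ - b * koszulOn D c univ := by
  rw [koszul_eq_koszulOn hD, Fin.univ_succ, cons_eq_insert, koszulOn_insert _ _ (by simp),
    koszulOn_map, koszulOn_map]
  rfl

theorem koszul_restr {D : A → A} (hD : D 1 = 0) (a : α → A) (s : Finset α) :
    koszul D #s (restr a s) = koszulOn D a s := by
  rw [koszul_eq_koszulOn hD, koszulOn_restr]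

theorem koszul_cons_restr {D : A → A} (hD : D 1 = 0) (b : A) (a : α → A) (s : Finset α) :
    koszul D (#s + 1) (Fin.cons b (restr a s)) =
      koszulOn (fun x => D (b * x)) a s - b * koszulOn D a s := by
  rw [koszul_cons hD, koszulOn_restr, koszulOn_restr]

theorem sum_koszulOn_compl_eq_koszulOn_comp [Fintype α] {F : Type*} [FunLike F A A]
    [AddMonoidHomClass F A A] (D : F) (D' : A → A) (a : α → A) :
    ∑ S : Finset α, koszulOn (fun x => D (koszulOn D' a S * x)) a Sᶜ =
      koszulOn (D ∘ D') a univ := by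
  calc ∑ S : Finset α, koszulOn (fun x => D (koszulOn D' a S * x)) a Sᶜ
      = ∑ S ∈ univ.powerset, ∑ U ∈ (univ \ S).powerset, (-1 : ℤ) ^ #((univ \ S) \ U) •
          (D (koszulOn D' a S * ∏ i ∈ U, a i) * ∏ i ∈ (univ \ S) \ U, a i) := by
        simp only [powerset_univ, compl_eq_univ_sdiff]
        rfl
    _ = ∑ V ∈ univ.powerset, ∑ S ∈ V.powerset, (-1 : ℤ) ^ #((univ \ S) \ (V \ S)) •
          (D (koszulOn D' a S * ∏ i ∈ V \ S, a i) * ∏ i ∈ (univ \ S) \ (V \ S), a i) :=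
        sum_powerset_sum_powerset_sdiff univ fun S U => (-1 : ℤ) ^ #((univ \ S) \ U) •
          (D (koszulOn D' a S * ∏ i ∈ U, a i) * ∏ i ∈ (univ \ S) \ U, a i)
    _ = ∑ V ∈ univ.powerset, (-1 : ℤ) ^ #(univ \ V) •
          (D (∑ S ∈ V.powerset, koszulOn D' a S * ∏ i ∈ V \ S, a i) *
            ∏ i ∈ univ \ V, a i) := by
        refine sum_congr rfl fun V _ => ?_
        rw [map_sum, sum_mul, smul_sum]
        refine sum_congr rfl fun S hS => ?_
        rw [sdiff_sdiff_sdiff_cancel_right (mem_powerset.mp hS)]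
    _ = koszulOn (D ∘ D') a univ := by
        simp only [sum_koszulOn_mul_prod_sdiff]
        rfl

end KoszulOn

theorem koszul_commutator_general (K A : Type*) [Field K]
    [CommRing A] [Algebra K A] (Δ Δ' : A →ₗ[K] A) (hΔ : Δ 1 = 0) (hΔ' : Δ' 1 = 0) :
    ∀ (n : ℕ), 1 ≤ n → ∀ a : Fin n → A,
      koszul (⇑(Δ ∘ₗ Δ' - Δ' ∘ₗ Δ)) n a =
        ∑ i ∈ Finset.Icc 1 n,
          ∑ S ∈ (Finset.univ : Finset (Fin n)).powerset.filter fun S => S.card = i,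
            (koszul (⇑Δ) (Sᶜ.card + 1)
                (Fin.cons (koszul (⇑Δ') S.card (restr a S)) (restr a Sᶜ)) -
              koszul (⇑Δ') (Sᶜ.card + 1)
                (Fin.cons (koszul (⇑Δ) S.card (restr a S)) (restr a Sᶜ))) := by
  intro n _ a
  have hcross : ∑ S : Finset (Fin n), koszulOn Δ' a S * koszulOn Δ a Sᶜ =
      ∑ S : Finset (Fin n), koszulOn Δ a S * koszulOn Δ' a Sᶜ := by
    rw [← Equiv.sum_comp (compl_involutive.toPerm _)]
    simp [mul_comm]
  simp only [koszul_restr hΔ, koszul_restr hΔ', koszul_cons_restr hΔ, koszul_cons_restr hΔ']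
  rw [sum_Icc_sum_card_eq_sum (by simp [hΔ, hΔ']) (Fintype.card_fin n).le]
  simp only [sum_sub_distrib, sum_koszulOn_compl_eq_koszulOn_comp, hcross]
  rw [koszul_eq_koszulOn (by simp [hΔ, hΔ']),
    show ⇑(Δ ∘ₗ Δ' - Δ' ∘ₗ Δ) = ⇑Δ ∘ ⇑Δ' - ⇑Δ' ∘ ⇑Δ from rfl, koszulOn_sub]
  abel

/-- the Koszul bracket construction is a Lie algebra morphism; in Taylor
coefficients, for the commutator `Δ∘Δ′ − Δ′∘Δ`:
`K([Δ,Δ′])_n(a_1,…,a_n) = Σ_{i=1}^{n} Σ_{|S|=i} [K(Δ)_{n−i+1}(K(Δ′)_i((a_s)_{s∈S}),(a_j)_{j∉S})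
  − K(Δ′)_{n−i+1}(K(Δ)_i((a_s)_{s∈S}),(a_j)_{j∉S})]`. -/
theorem koszul_commutator (K A : Type*) [Field K] [CharZero K]
    [CommRing A] [Algebra K A] (Δ Δ' : A →ₗ[K] A) (hΔ : Δ 1 = 0) (hΔ' : Δ' 1 = 0) :
    ∀ (n : ℕ), 1 ≤ n → ∀ a : Fin n → A,
      koszul (⇑(Δ ∘ₗ Δ' - Δ' ∘ₗ Δ)) n a =
        ∑ i ∈ Finset.Icc 1 n,
          ∑ S ∈ (Finset.univ : Finset (Fin n)).powerset.filter fun S => S.card = i,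
            (koszul (⇑Δ) (Sᶜ.card + 1)
                (Fin.cons (koszul (⇑Δ') S.card (restr a S)) (restr a Sᶜ)) -
              koszul (⇑Δ') (Sᶜ.card + 1)
                (Fin.cons (koszul (⇑Δ) S.card (restr a S)) (restr a Sᶜ))) :=
  koszul_commutator_general K A Δ Δ' hΔ hΔ'
end

section
/- Let Δ : A → A be a K-linear endomorphism with Δ(1)=0 of a commutative unital K-algebra A, and let a ∈ A be nilpotent. Then K(Δ)_n(a,…,a) = 0 for all sufficiently large n and Σ_{n≥1} (1/n!) K(Δ)_n(a,…,a) = exp(−a)·Δ(exp(a)), where exp(a) := Σ_{m≥0} a^m/m! (a finite sum by nilpotency). In particular Σ_{n≥1} (1/n!) K(Δ)_n(a,…,a) = 0 if and only if Δ(exp(a)) = 0. -/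
/-!
Expanding the bracket on a constant tuple gives `K(Δ)_n(a,…,a) = Σ_{i+j=n} C(n,i) (-a)^i Δ(a^j)`,
which is `n!` times the degree-`n` term of the Cauchy product of the exponential series of `-a`
with `Σ_j Δ(a^j)/j! = Δ(exp a)`. For nilpotent `a` all these series are finite sums, so
`Σ_n K(Δ)_n(a,…,a)/n! = exp(-a) Δ(exp a)`. The same Cauchy product together with the binomial
theorem gives `exp(-a) exp(a) = exp 0 = 1`; hence `exp(-a)` is a unit, and the sum vanishes exactly
when `Δ(exp a)` does.
-/

open Finset

/-- Exponential `exp(a) = Σ_{m≥0} a^m/m!` of an element of a `K`-algebra; the sum is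
finite whenever `a` is nilpotent. -/
noncomputable def expNil (K : Type*) {A : Type*} [Field K] [CommRing A] [Algebra K A]
    (a : A) : A :=
  ∑ᶠ m : ℕ, ((m.factorial : K)⁻¹) • a ^ m

open Function

theorem finsum_mul_finsum_eq_finsum_antidiagonal {R : Type*} [Semiring R] {f g : ℕ → R}
    (hf : HasFiniteSupport f) (hg : HasFiniteSupport g) :
    (∑ᶠ i, f i) * ∑ᶠ j, g j = ∑ᶠ n, ∑ p ∈ antidiagonal n, f p.1 * g p.2 := by
  obtain ⟨N, hN⟩ := (hf.union hg).toFinset.exists_nat_subset_range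
  have hfN : support f ⊆ range N := fun i hi => hN (by simp [hi])
  have hgN : support g ⊆ range N := fun j hj => hN (by simp [hj])
  have hbox : ∀ p : ℕ × ℕ, p ∉ range N ×ˢ range N → f p.1 * g p.2 = 0 := by
    rintro ⟨i, j⟩ hp
    rcases not_and_or.1 (mt mem_product.2 hp) with hi | hj
    · rw [notMem_support.1 fun h => hi (hfN h), zero_mul]
    · rw [notMem_support.1 fun h => hj (hgN h), mul_zero]
  have hsupp : (support fun n => ∑ p ∈ antidiagonal n, f p.1 * g p.2) ⊆ range (2 * N) := by
    intro n hn
    by_contra hn'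
    refine hn (sum_eq_zero fun p hp => hbox p ?_)
    simp only [mem_coe, mem_range, HasAntidiagonal.mem_antidiagonal, mem_product] at hp hn' ⊢
    omega
  have hmaps : ∀ p ∈ range N ×ˢ range N, p.1 + p.2 ∈ range (2 * N) := by
    intro p hp
    simp only [mem_product, mem_range] at hp ⊢
    omega
  -- both sides become the sum of `f i * g j` over the box `[0, N)²`, grouped by `i + j` on the right
  rw [finsum_eq_sum_of_support_subset f hfN, finsum_eq_sum_of_support_subset g hgN,
    finsum_eq_sum_of_support_subset _ hsupp, sum_mul_sum, ← sum_product',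
    ← sum_fiberwise_of_maps_to hmaps]
  refine sum_congr rfl fun n _ => sum_subset (fun p hp => ?_) fun p hpn hp => hbox p ?_
  · exact HasAntidiagonal.mem_antidiagonal.2 (mem_filter.1 hp).2
  · exact fun hmem => hp (mem_filter.2 ⟨hmem, HasAntidiagonal.mem_antidiagonal.1 hpn⟩)

theorem inv_factorial_mul_inv_factorial {K : Type*} [Field K] [CharZero K] (i j : ℕ) :
    (i.factorial : K)⁻¹ * (j.factorial : K)⁻¹ =
      ((i + j).factorial : K)⁻¹ * ((i + j).choose i : K) := by
  rw [Nat.cast_add_choose, div_eq_mul_inv,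
    inv_mul_cancel_left₀ (Nat.cast_ne_zero.2 (Nat.factorial_ne_zero _)), mul_inv]

theorem finsum_inv_factorial_smul_mul_finsum_inv_factorial_smul {K A : Type*} [Field K]
    [CharZero K] [Semiring A] [Algebra K A] {f g : ℕ → A} (hf : HasFiniteSupport f)
    (hg : HasFiniteSupport g) :
    (∑ᶠ i, (i.factorial : K)⁻¹ • f i) * ∑ᶠ j, (j.factorial : K)⁻¹ • g j =
      ∑ᶠ n, (n.factorial : K)⁻¹ • ∑ p ∈ antidiagonal n, n.choose p.1 • (f p.1 * g p.2) := by
  rw [finsum_mul_finsum_eq_finsum_antidiagonal (by fun_prop) (by fun_prop)]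
  refine finsum_congr fun n => ?_
  rw [smul_sum]
  refine sum_congr rfl fun p hp => ?_
  rw [← HasAntidiagonal.mem_antidiagonal.1 hp, smul_mul_smul_comm, ← Nat.cast_smul_eq_nsmul K,
    smul_smul, inv_factorial_mul_inv_factorial]

theorem finsum_nat_succ_eq_finsum {M : Type*} [AddCommMonoid M] {f : ℕ → M} (h₀ : f 0 = 0) :
    ∑ᶠ n, f (n + 1) = ∑ᶠ n, f n := by
  have hsupp : support f ⊆ Set.range Nat.succ := fun n hn =>
    ⟨n.pred, Nat.succ_pred_eq_of_ne_zero fun h => hn (h ▸ h₀)⟩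
  rw [← finsum_mem_range Nat.succ_injective, finsum_mem_def, Set.indicator_eq_self.2 hsupp]

theorem IsNilpotent.hasFiniteSupport_pow {M : Type*} [MonoidWithZero M] {x : M}
    (hx : IsNilpotent x) : HasFiniteSupport fun n : ℕ => x ^ n := by
  obtain ⟨N, hN⟩ := hx
  refine (Set.finite_lt_nat N).subset fun n hn => ?_
  by_contra h
  exact hn (pow_eq_zero_of_le (not_lt.1 h) hN)

section Koszul

variable {R : Type*} [CommRing R] {D : R → R}

theorem koszul_zero (a : Fin 0 → R) : koszul D 0 a = 0 := by
  simp [koszul, filter_singleton]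

theorem koszul_const_eq_sum_antidiagonal (hD : D 1 = 0) (a : R) (n : ℕ) :
    koszul D n (fun _ => a) = ∑ p ∈ antidiagonal n, n.choose p.1 • ((-a) ^ p.1 * D (a ^ p.2)) := by
  have hterm (s : Finset (Fin n)) :
      (-1 : ℤ) ^ (n - #s) • (D (∏ _i ∈ s, a) * ∏ _i ∈ sᶜ, a) = (-a) ^ (n - #s) * D (a ^ #s) := by
    rw [prod_const, prod_const, card_compl, Fintype.card_fin, neg_pow, zsmul_eq_mul]
    push_cast
    ring
  rw [koszul, sum_filter_of_ne fun s _ hs => nonempty_iff_ne_empty.2 ?_]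
  · rw [sum_congr rfl fun s _ => hterm s,
      sum_powerset_apply_card (fun k => (-a) ^ (n - k) * D (a ^ k)), card_univ, Fintype.card_fin,
      ← Nat.sum_antidiagonal_eq_sum_range_succ fun i j => n.choose i • ((-a) ^ j * D (a ^ i)),
      ← Nat.sum_antidiagonal_swap]
    refine sum_congr rfl fun p hp => ?_
    rw [Prod.fst_swap, Prod.snd_swap,
      Nat.choose_symm_of_eq_add (HasAntidiagonal.mem_antidiagonal.1 hp).symm]
  · rintro rfl
    simp [hD] at hs

theorem koszul_const_eq_zero_of_pow_eq_zero (hD₀ : D 0 = 0) (hD₁ : D 1 = 0) {a : R} {N n : ℕ}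
    (ha : a ^ N = 0) (hn : 2 * N ≤ n + 1) : koszul D n (fun _ => a) = 0 := by
  rw [koszul_const_eq_sum_antidiagonal hD₁]
  refine sum_eq_zero fun p hp => ?_
  rcases le_or_gt N p.1 with h | h
  · rw [neg_pow, pow_eq_zero_of_le h ha, mul_zero, zero_mul, smul_zero]
  · have h₂ : N ≤ p.2 := by rw [HasAntidiagonal.mem_antidiagonal] at hp; omega
    rw [pow_eq_zero_of_le h₂ ha, hD₀, mul_zero, smul_zero]

end Koszul

section Exp

variable (K : Type*) {A : Type*} [Field K] [CommRing A] [Algebra K A]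

theorem expNil_zero : expNil K (0 : A) = 1 := by
  rw [expNil, finsum_eq_single _ 0 fun m hm => by rw [zero_pow hm, smul_zero]]
  simp

variable [CharZero K]

theorem expNil_add {x y : A} (hx : IsNilpotent x) (hy : IsNilpotent y) :
    expNil K (x + y) = expNil K x * expNil K y := by
  simp only [expNil, finsum_inv_factorial_smul_mul_finsum_inv_factorial_smul hx.hasFiniteSupport_pow
    hy.hasFiniteSupport_pow, (Commute.all x y).add_pow']

theorem expNil_neg_mul_expNil {x : A} (hx : IsNilpotent x) : expNil K (-x) * expNil K x = 1 := by
  rw [← expNil_add K hx.neg hx, neg_add_cancel, expNil_zero]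

theorem finsum_inv_factorial_smul_koszul_const (Δ : A →ₗ[K] A) (hΔ : Δ 1 = 0) {a : A}
    (ha : IsNilpotent a) :
    ∑ᶠ n, (n.factorial : K)⁻¹ • koszul Δ n (fun _ => a) = expNil K (-a) * Δ (expNil K a) := by
  rw [expNil, expNil, map_finsum Δ (ha.hasFiniteSupport_pow.fun_smul_right _)]
  simp only [map_smul]
  rw [finsum_inv_factorial_smul_mul_finsum_inv_factorial_smul ha.neg.hasFiniteSupport_pow
    (ha.hasFiniteSupport_pow.fun_comp (map_zero Δ))]
  exact finsum_congr fun n => by rw [koszul_const_eq_sum_antidiagonal hΔ]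

end Exp

/-- for a linear endomorphism `Δ` with `Δ(1)=0` and a nilpotent `a`, the
diagonal Koszul brackets eventually vanish, `Σ_{n≥1} (1/n!) K(Δ)_n(a,…,a) =
exp(−a)·Δ(exp(a))`, and this sum vanishes iff `Δ(exp(a)) = 0`. -/
theorem koszul_exp (K A : Type*) [Field K] [CharZero K]
    [CommRing A] [Algebra K A] (Δ : A →ₗ[K] A) (hΔ : Δ 1 = 0)
    (a : A) (ha : IsNilpotent a) :
    (∃ N : ℕ, ∀ n : ℕ, N ≤ n → koszul (⇑Δ) n (fun _ => a) = 0) ∧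
    (∑ᶠ n : ℕ, (((n + 1).factorial : K)⁻¹) • koszul (⇑Δ) (n + 1) (fun _ => a)) =
      expNil K (-a) * Δ (expNil K a) ∧
    ((∑ᶠ n : ℕ, (((n + 1).factorial : K)⁻¹) • koszul (⇑Δ) (n + 1) (fun _ => a)) = 0 ↔
      Δ (expNil K a) = 0) := by
  have hseries : ∑ᶠ n : ℕ, (((n + 1).factorial : K)⁻¹) • koszul (⇑Δ) (n + 1) (fun _ => a) =
      expNil K (-a) * Δ (expNil K a) := by
    rw [finsum_nat_succ_eq_finsum (f := fun n => (n.factorial : K)⁻¹ • koszul Δ n fun _ => a)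
      (by rw [koszul_zero, smul_zero]), finsum_inv_factorial_smul_koszul_const K Δ hΔ ha]
  have hunit : IsUnit (expNil K (-a)) := .of_mul_eq_one _ (expNil_neg_mul_expNil K ha)
  obtain ⟨N, hN⟩ := ha
  refine ⟨⟨2 * N, fun n hn => koszul_const_eq_zero_of_pow_eq_zero (map_zero Δ) hΔ hN (by omega)⟩,
    hseries, ?_⟩
  rw [hseries, hunit.mul_right_eq_zero]
end

section
/- Let (σ,τ,h) be a semifull algebra contraction of (A,d_A) onto (B,d_B). Then for all a,b ∈ A and x ∈ B: h(h(a)·b + a·h(b)) − h(a)·h(b) = h(K(d_A)_2(h(a),h(b))) and h(a·τ(x)) − h(a)·τ(x) = h(K(d_A)_2(h(a),τ(x))), where K(d_A)_2(u,v) = d_A(uv) − d_A(u)v − u·d_A(v). -/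
open Finset

/-- for a semifull algebra contraction `(σ,τ,h)` of `(A,d_A)` onto `(B,d_B)`:
`h(h(a)·b + a·h(b)) − h(a)·h(b) = h(K(d_A)_2(h(a),h(b)))` and
`h(a·τ(x)) − h(a)·τ(x) = h(K(d_A)_2(h(a),τ(x)))`,
where `K(d)_2(u,v) = d(uv) − d(u)v − u·d(v)`. -/
theorem semifull_homotopy_failure (K A B : Type*) [Field K] [CharZero K]
    [CommRing A] [Algebra K A] [CommRing B] [Algebra K B]
    (dA : A →ₗ[K] A) (dB : B →ₗ[K] B) (σ : A →ₗ[K] B) (τ : B →ₗ[K] A) (h : A →ₗ[K] A)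
    (hdA2 : ∀ a, dA (dA a) = 0) (hdB2 : ∀ x, dB (dB x) = 0)
    (hσd : ∀ a, σ (dA a) = dB (σ a)) (hτd : ∀ x, τ (dB x) = dA (τ x))
    (hστ : ∀ x, σ (τ x) = x)
    (hhtp : ∀ a, h (dA a) + dA (h a) = τ (σ a) - a)
    (hσh : ∀ a, σ (h a) = 0) (hhτ : ∀ x, h (τ x) = 0) (hhh : ∀ a, h (h a) = 0)
    (hdA1 : dA 1 = 0) (hdB1 : dB 1 = 0)
    (s1 : ∀ a b : A, h (h a * h b) = 0) (s2 : ∀ (a : A) (x : B), h (h a * τ x) = 0)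
    (s3 : ∀ x y : B, h (τ x * τ y) = 0) (s4 : h 1 = 0)
    (s5 : ∀ a b : A, σ (h a * h b) = 0) (s6 : ∀ (a : A) (x : B), σ (h a * τ x) = 0)
    (s7 : ∀ x y : B, σ (τ x * τ y) = x * y) (s8 : σ 1 = 1) :
    ∀ (a b : A) (x : B),
      (h (h a * b + a * h b) - h a * h b =
        h (dA (h a * h b) - dA (h a) * h b - h a * dA (h b))) ∧
      (h (a * τ x) - h a * τ x =
        h (dA (h a * τ x) - dA (h a) * τ x - h a * dA (τ x))) := by
  intro a b x
  have hdAh : ∀ c : A, dA (h c) = τ (σ c) - c - h (dA c) := fun c => by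
    linear_combination hhtp c
  have h1 : h (dA (h a * h b)) = -(h a * h b) := by
    have H := hhtp (h a * h b)
    rw [s1, map_zero, s5, map_zero] at H
    linear_combination H
  have h2 : h (dA (h a) * h b) = -h (a * h b) := by
    rw [hdAh a, sub_mul, sub_mul, map_sub, map_sub, mul_comm (τ (σ a)) (h b),
      s2 b (σ a), s1 (dA a) b]
    ring
  have h3 : h (h a * dA (h b)) = -h (h a * b) := by
    rw [hdAh b, mul_sub, mul_sub, map_sub, map_sub, s2 a (σ b), s1 a (dA b)]
    ring
  have g1 : h (dA (h a * τ x)) = -(h a * τ x) := by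
    have H := hhtp (h a * τ x)
    rw [s2, map_zero, s6, map_zero] at H
    linear_combination H
  have g2 : h (dA (h a) * τ x) = -h (a * τ x) := by
    rw [hdAh a, sub_mul, sub_mul, map_sub, map_sub, s3 (σ a) x, s2 (dA a) x]
    ring
  have g3 : h (h a * dA (τ x)) = 0 := by
    rw [← hτd x, s2 a (dB x)]
  refine ⟨?_, ?_⟩
  · rw [map_sub, map_sub, map_add, h1, h2, h3]
    ring
  · rw [map_sub, map_sub, g1, g2, g3]
    ring
end

section
/- Let (σ,τ,h) be a semifull algebra contraction of (A,d_A) onto (B,d_B). Then for all a,b ∈ A and x ∈ B: σ(h(a)·b + a·h(b)) = σ(K(d_A)_2(h(a),h(b))) and σ(a·τ(x)) − σ(a)·x = σ(K(d_A)_2(h(a),τ(x))), where K(d_A)_2(u,v) = d_A(uv) − d_A(u)v − u·d_A(v). -/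
open Finset

/-- for a semifull algebra contraction `(σ,τ,h)` of `(A,d_A)` onto `(B,d_B)`:
`σ(h(a)·b + a·h(b)) = σ(K(d_A)_2(h(a),h(b)))` and
`σ(a·τ(x)) − σ(a)·x = σ(K(d_A)_2(h(a),τ(x)))`,
where `K(d)_2(u,v) = d(uv) − d(u)v − u·d(v)`. -/
theorem semifull_projection_failure (K A B : Type*) [Field K] [CharZero K]
    [CommRing A] [Algebra K A] [CommRing B] [Algebra K B]
    (dA : A →ₗ[K] A) (dB : B →ₗ[K] B) (σ : A →ₗ[K] B) (τ : B →ₗ[K] A) (h : A →ₗ[K] A)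
    (hdA2 : ∀ a, dA (dA a) = 0) (hdB2 : ∀ x, dB (dB x) = 0)
    (hσd : ∀ a, σ (dA a) = dB (σ a)) (hτd : ∀ x, τ (dB x) = dA (τ x))
    (hστ : ∀ x, σ (τ x) = x)
    (hhtp : ∀ a, h (dA a) + dA (h a) = τ (σ a) - a)
    (hσh : ∀ a, σ (h a) = 0) (hhτ : ∀ x, h (τ x) = 0) (hhh : ∀ a, h (h a) = 0)
    (hdA1 : dA 1 = 0) (hdB1 : dB 1 = 0)
    (s1 : ∀ a b : A, h (h a * h b) = 0) (s2 : ∀ (a : A) (x : B), h (h a * τ x) = 0)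
    (s3 : ∀ x y : B, h (τ x * τ y) = 0) (s4 : h 1 = 0)
    (s5 : ∀ a b : A, σ (h a * h b) = 0) (s6 : ∀ (a : A) (x : B), σ (h a * τ x) = 0)
    (s7 : ∀ x y : B, σ (τ x * τ y) = x * y) (s8 : σ 1 = 1) :
    ∀ (a b : A) (x : B),
      (σ (h a * b + a * h b) = σ (dA (h a * h b) - dA (h a) * h b - h a * dA (h b))) ∧
      (σ (a * τ x) - σ a * x = σ (dA (h a * τ x) - dA (h a) * τ x - h a * dA (τ x))) := by
  intro a b x
  have key : ∀ a : A, dA (h a) = τ (σ a) - a - h (dA a) := fun a => by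
    linear_combination (hhtp a)
  constructor
  · have e1 : σ (dA (h a * h b)) = 0 := by rw [hσd, s5, map_zero]
    have e2 : σ (dA (h a) * h b) = - σ (a * h b) := by
      rw [key a, sub_mul, sub_mul, map_sub, map_sub]
      have t1 : σ (τ (σ a) * h b) = 0 := by rw [mul_comm]; exact s6 b (σ a)
      rw [t1, s5]; ring
    have e3 : σ (h a * dA (h b)) = - σ (h a * b) := by
      rw [key b, mul_sub, mul_sub, map_sub, map_sub, s6 a (σ b), s5]; ring
    rw [map_add, map_sub, map_sub, e1, e2, e3]; ring
  · have f1 : σ (dA (h a * τ x)) = 0 := by rw [hσd, s6, map_zero]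
    have f2 : σ (dA (h a) * τ x) = σ a * x - σ (a * τ x) := by
      rw [key a, sub_mul, sub_mul, map_sub, map_sub, s7, s6]; ring
    have f3 : σ (h a * dA (τ x)) = 0 := by rw [← hτd, s6]
    rw [map_sub, map_sub, f1, f2, f3]; ring
end
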